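/- arXiv:1707.04316 — 8 statements merged into one kernel-verified Lean document; each statement's English description precedes it below -/
import Mathlib

section
/- Let γ ∈ ℕ and let M be a stable matching of a preference profile P with egalitarian cost γ(M) ≤ γ. Then the number of mutually acceptable pairs e' of cost at most γ such that some pair e ∈ M harmlessly blocks e' is at most γ³. -/
namespace StableRoommates

/-- A preference profile: each agent `i` has a finite set `acc i` of acceptable agents
(not containing `i` itself) and a weak order `pref i` (complete and transitive) on `acc i`;
`pref i x y` means `x ⪰_i y`. -/
structure Profile (V : Type*) [DecidableEq V] [Fintype V] where
  acc : V → Finset V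
  not_self : ∀ i, i ∉ acc i
  pref : V → V → V → Prop
  pref_total : ∀ i, ∀ x ∈ acc i, ∀ y ∈ acc i, pref i x y ∨ pref i y x
  pref_trans : ∀ i x y z, pref i x y → pref i y z → pref i x z

namespace Profile

variable {V : Type*} [DecidableEq V] [Fintype V]

/-- Strict preference `x ≻_i y`. -/
def SPref (P : Profile V) (i x y : V) : Prop := P.pref i x y ∧ ¬ P.pref i y x

/-- Tie `x ∼_i y`. -/
def Tie (P : Profile V) (i x y : V) : Prop := P.pref i x y ∧ P.pref i y x

/-- `x` and `y` are mutually acceptable. -/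
def MutAcc (P : Profile V) (x y : V) : Prop := y ∈ P.acc x ∧ x ∈ P.acc y

/-- `rank_i(y) = |{z ∈ V_i : z ≻_i y}|`. -/
noncomputable def rank (P : Profile V) (i y : V) : ℕ :=
  {z : V | z ∈ P.acc i ∧ P.SPref i z y}.ncard

/-- A matching, encoded as a symmetric partial partner function: `M x = some y`
means the pair `{x, y}` belongs to the matching, `M x = none` means `x` is unmatched. -/
structure IsMatching (P : Profile V) (M : V → Option V) : Prop where
  symm : ∀ x y, M x = some y → M y = some x
  mutacc : ∀ x y, M x = some y → P.MutAcc x y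

/-- The mutually acceptable pair `{x,y} ∉ M` blocks `M`. -/
def Blocks (P : Profile V) (M : V → Option V) (x y : V) : Prop :=
  P.MutAcc x y ∧ M x ≠ some y ∧
    (∀ z, M x = some z → P.SPref x y z) ∧
    (∀ z, M y = some z → P.SPref y x z)

/-- A matching is stable if no pair blocks it. -/
def Stable (P : Profile V) (M : V → Option V) : Prop :=
  ∀ x y, ¬ P.Blocks M x y

/-- The contribution of agent `i` to the egalitarian cost: `rank_i(M(i))`,
with `rank_i(⊥) = |V_i|`. -/
noncomputable def agentCost (P : Profile V) (M : V → Option V) (i : V) : ℕ :=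
  match M i with
  | none => (P.acc i).card
  | some y => P.rank i y

/-- The egalitarian cost `γ(M) = Σ_{i ∈ V} rank_i(M(i))`. -/
noncomputable def egalCost (P : Profile V) (M : V → Option V) : ℕ :=
  ∑ i, P.agentCost M i

/-- Two disjoint mutually acceptable pairs `{u,v}` and `{u',v'}` block each other
via `{u,u'}`. -/
def BlockVia (P : Profile V) (u v u' v' : V) : Prop :=
  P.MutAcc u v ∧ P.MutAcc u' v' ∧
    u ≠ u' ∧ u ≠ v' ∧ v ≠ u' ∧ v ≠ v' ∧
    P.MutAcc u u' ∧ P.SPref u u' v ∧ P.SPref u' u v'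

/-- The pair `{u,v}` is critical for `u` (w.r.t. threshold `γ`) if
`|{x ∈ V_u \ {v} : x ⪰_u v}| > γ`. -/
def CriticalFor (P : Profile V) (γ : ℕ) (u v : V) : Prop :=
  γ < {x : V | x ∈ P.acc u ∧ x ≠ v ∧ P.pref u x v}.ncard

/-- The pair `{u,v}` is harmless for `u` (w.r.t. threshold `γ`). -/
def HarmlessFor (P : Profile V) (γ : ℕ) (u v : V) : Prop := ¬ P.CriticalFor γ u v

/-- `u'` is a culprit of the matching `M`: some pair `{u,v} ∈ M` and some
mutually acceptable pair `{u',v'} ∉ M`, disjoint from it, block each other via `{u,u'}`. -/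
def Culprit (P : Profile V) (M : V → Option V) (u' : V) : Prop :=
  ∃ u v v', M u = some v ∧ M u' ≠ some v' ∧ P.BlockVia u v u' v'

end Profile

end StableRoommates

open StableRoommates Profile

namespace StmtSeven

/-- A finite set with a total transitive relation has a bottom element. -/
lemma finset_exists_bot {α : Type*} [DecidableEq α] (r : α → α → Prop)
    (htrans : ∀ x y z, r x y → r y z → r x z) :
    ∀ s : Finset α, (∀ x ∈ s, ∀ y ∈ s, r x y ∨ r y x) → s.Nonempty →
      ∃ m ∈ s, ∀ x ∈ s, r x m := by
  intro s
  induction s using Finset.induction_on with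
  | empty => intro _ h; simp at h
  | @insert a s ha ih =>
    intro htot _
    rcases s.eq_empty_or_nonempty with rfl | hs
    · refine ⟨a, by simp, ?_⟩
      intro x hx
      have hxa : x = a := by simpa using hx
      subst hxa
      rcases htot x hx x hx with h | h <;> exact h
    · obtain ⟨m, hm, hbot⟩ := ih (fun x hx y hy =>
        htot x (Finset.mem_insert_of_mem hx) y (Finset.mem_insert_of_mem hy)) hs
      rcases htot a (Finset.mem_insert_self a s) m (Finset.mem_insert_of_mem hm) with h | h
      · refine ⟨m, Finset.mem_insert_of_mem hm, fun x hx => ?_⟩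
        rcases Finset.mem_insert.mp hx with rfl | hx
        · exact h
        · exact hbot x hx
      · refine ⟨a, Finset.mem_insert_self a s, fun x hx => ?_⟩
        rcases Finset.mem_insert.mp hx with rfl | hx
        · rcases htot x hx x hx with h' | h' <;> exact h'
        · exact htrans x m a (hbot x hx) h

variable {V : Type*} [DecidableEq V] [Fintype V]

open Classical in
lemma rank_eq (P : Profile V) (i y : V) :
    P.rank i y = (Finset.univ.filter fun z => z ∈ P.acc i ∧ P.SPref i z y).card := by
  rw [Profile.rank, ← Set.ncard_coe_finset]
  congr 1
  ext z
  simp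

open Classical in
/-- The number of culprits is at most the egalitarian cost. -/
lemma culprit_card_le (P : Profile V) (γ : ℕ) (M : V → Option V)
    (hcost : P.egalCost M ≤ γ) :
    (Finset.univ.filter fun u' : V =>
      ∃ u v v', M u = some v ∧ P.BlockVia u v u' v').card ≤ γ := by
  set C : Finset V := Finset.univ.filter fun u' : V =>
      ∃ u v v', M u = some v ∧ P.BlockVia u v u' v' with hC
  -- choose for each culprit a matched agent who prefers it
  have hchoice : ∀ u' ∈ C, ∃ u, ∃ v v', M u = some v ∧ P.BlockVia u v u' v' := by
    intro u' hu'
    rcases (Finset.mem_filter.mp hu').2 with ⟨u, v, v', h1, h2⟩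
    exact ⟨u, v, v', h1, h2⟩
  set f : V → V := fun u' =>
    if h : ∃ u, ∃ v v', M u = some v ∧ P.BlockVia u v u' v' then h.choose else u' with hf
  have hfib : ∀ u' ∈ C, f u' ∈ (Finset.univ : Finset V) := fun _ _ => Finset.mem_univ _
  have hcard := Finset.card_eq_sum_card_fiberwise hfib
  rw [hcard]
  refine le_trans (Finset.sum_le_sum (fun u _ => ?_)) hcost
  -- each fiber has card ≤ agentCost u
  by_cases hne : (C.filter fun a => f a = u).Nonempty
  · obtain ⟨w', hw'⟩ := hne
    have hw'C : w' ∈ C := (Finset.mem_filter.mp hw').1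
    have hw'f : f w' = u := (Finset.mem_filter.mp hw').2
    have hex : ∃ u, ∃ v v', M u = some v ∧ P.BlockVia u v w' v' := by
      rcases (Finset.mem_filter.mp hw'C).2 with ⟨u0, v0, v0', h1, h2⟩
      exact ⟨u0, v0, v0', h1, h2⟩
    have hspec := hex.choose_spec
    have hfw : f w' = hex.choose := dif_pos hex
    rw [hfw] at hw'f
    obtain ⟨v, v', hMu, _⟩ := hspec
    rw [hw'f] at hMu
    -- now M u = some v
    have hsub : (C.filter fun a => f a = u) ⊆
        Finset.univ.filter fun z => z ∈ P.acc u ∧ P.SPref u z v := by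
      intro x hx
      have hxC : x ∈ C := (Finset.mem_filter.mp hx).1
      have hxf : f x = u := (Finset.mem_filter.mp hx).2
      have hex2 : ∃ u, ∃ v v', M u = some v ∧ P.BlockVia u v x v' := by
        rcases (Finset.mem_filter.mp hxC).2 with ⟨u0, v0, v0', h1, h2⟩
        exact ⟨u0, v0, v0', h1, h2⟩
      have hspec2 := hex2.choose_spec
      have hfx : f x = hex2.choose := dif_pos hex2
      rw [hfx] at hxf
      obtain ⟨v2, v2', hMu2, hbv2⟩ := hspec2
      rw [hxf] at hMu2 hbv2
      have hv2 : v2 = v := by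
        have := hMu2.symm.trans hMu
        exact Option.some.inj this
      subst hv2
      refine Finset.mem_filter.mpr ⟨Finset.mem_univ _, ?_, ?_⟩
      · exact hbv2.2.2.2.2.2.2.1.1
      · exact hbv2.2.2.2.2.2.2.2.1
    calc (C.filter fun a => f a = u).card
        ≤ (Finset.univ.filter fun z => z ∈ P.acc u ∧ P.SPref u z v).card :=
          Finset.card_le_card hsub
      _ = P.rank u v := (rank_eq P u v).symm
      _ = P.agentCost M u := by simp [Profile.agentCost, hMu]
  · rw [Finset.not_nonempty_iff_eq_empty.mp hne]
    simp

open Classical in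
/-- For a fixed agent `u'`, the number of acceptable `v'` of positive rank such that
`{u',v'}` is harmless for `u'` is at most `γ`. -/
lemma harmless_card_le (P : Profile V) (γ : ℕ) (u' : V) :
    (Finset.univ.filter fun v' : V =>
      v' ∈ P.acc u' ∧ 1 ≤ P.rank u' v' ∧ P.HarmlessFor γ u' v').card ≤ γ := by
  set S : Finset V := Finset.univ.filter fun v' : V =>
      v' ∈ P.acc u' ∧ 1 ≤ P.rank u' v' ∧ P.HarmlessFor γ u' v' with hS
  by_cases hne : S.Nonempty
  · -- bottom element of S
    have htotS : ∀ x ∈ S, ∀ y ∈ S, P.pref u' x y ∨ P.pref u' y x := by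
      intro x hx y hy
      exact P.pref_total u' x (Finset.mem_filter.mp hx).2.1 y (Finset.mem_filter.mp hy).2.1
    obtain ⟨v₀, hv₀S, hbot⟩ := finset_exists_bot (P.pref u') (P.pref_trans u') S htotS hne
    obtain ⟨hv₀acc, hv₀rank, hv₀harm⟩ := (Finset.mem_filter.mp hv₀S).2
    -- witness of rank ≥ 1
    have hz : ∃ z, z ∈ P.acc u' ∧ P.SPref u' z v₀ := by
      rw [rank_eq] at hv₀rank
      obtain ⟨z, hz⟩ := Finset.card_pos.mp (lt_of_lt_of_le Nat.zero_lt_one hv₀rank)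
      exact ⟨z, (Finset.mem_filter.mp hz).2⟩
    obtain ⟨z, hzacc, hzsp⟩ := hz
    -- top element of acc u'
    have htotA : ∀ x ∈ P.acc u', ∀ y ∈ P.acc u', P.pref u' y x ∨ P.pref u' x y := by
      intro x hx y hy
      rcases P.pref_total u' x hx y hy with h | h
      · exact Or.inr h
      · exact Or.inl h
    obtain ⟨w, hwacc, htop⟩ := finset_exists_bot (fun x y => P.pref u' y x)
      (fun x y z hxy hyz => P.pref_trans u' z y x hyz hxy) (P.acc u') htotA ⟨z, hzacc⟩
    -- w has rank 0
    have hwrank : P.rank u' w = 0 := by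
      rw [rank_eq, Finset.card_eq_zero]
      ext x
      simp only [Finset.mem_filter, Finset.mem_univ, true_and, Finset.notMem_empty,
        iff_false, not_and]
      intro hxacc hsp
      exact hsp.2 (htop x hxacc)
    have hwS : w ∉ S := by
      intro hw
      have := (Finset.mem_filter.mp hw).2.2.1
      omega
    -- w strictly preferred to v₀
    have hwsp : P.SPref u' w v₀ := by
      constructor
      · exact P.pref_trans u' w z v₀ (htop z hzacc) hzsp.1
      · intro hcon
        exact hzsp.2 (P.pref_trans u' v₀ w z hcon (htop z hzacc))
    have hwne : w ≠ v₀ := by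
      intro h
      subst h
      exact hwsp.2 hwsp.1
    -- the harmless set for v₀, as a Finset
    set T : Finset V := Finset.univ.filter fun x =>
      x ∈ P.acc u' ∧ x ≠ v₀ ∧ P.pref u' x v₀ with hT
    have hTcard : T.card ≤ γ := by
      have := hv₀harm
      rw [Profile.HarmlessFor, Profile.CriticalFor, not_lt] at this
      have heq : {x : V | x ∈ P.acc u' ∧ x ≠ v₀ ∧ P.pref u' x v₀}.ncard = T.card := by
        rw [← Set.ncard_coe_finset]
        congr 1
        ext x
        simp [hT]
      omega
    have hwT : w ∈ T := Finset.mem_filter.mpr ⟨Finset.mem_univ _, hwacc, hwne, hwsp.1⟩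
    have hsub : S ⊆ insert v₀ (T.erase w) := by
      intro x hx
      by_cases hxv : x = v₀
      · subst hxv; exact Finset.mem_insert_self _ _
      · refine Finset.mem_insert_of_mem (Finset.mem_erase.mpr ⟨?_, ?_⟩)
        · intro h; subst h; exact hwS hx
        · exact Finset.mem_filter.mpr ⟨Finset.mem_univ _,
            (Finset.mem_filter.mp hx).2.1, hxv, hbot x hx⟩
    have h1T : 1 ≤ T.card := Finset.card_pos.mpr ⟨w, hwT⟩
    calc S.card ≤ (insert v₀ (T.erase w)).card := Finset.card_le_card hsub
      _ ≤ (T.erase w).card + 1 := Finset.card_insert_le _ _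
      _ = (T.card - 1) + 1 := by rw [Finset.card_erase_of_mem hwT]
      _ = T.card := by omega
      _ ≤ γ := hTcard
  · rw [Finset.not_nonempty_iff_eq_empty.mp hne]
    simp

end StmtSeven

open StmtSeven

theorem stmt_7 {V : Type*} [DecidableEq V] [Fintype V] (P : Profile V)
    (γ : ℕ) (M : V → Option V) (hM : P.IsMatching M) (hstable : P.Stable M)
    (hcost : P.egalCost M ≤ γ) :
    {p : Sym2 V | ∃ u' v' : V, p = s(u', v') ∧
      P.rank u' v' + P.rank v' u' ≤ γ ∧
      ∃ u v : V, M u = some v ∧ P.BlockVia u v u' v' ∧ P.HarmlessFor γ u' v'}.ncard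
      ≤ γ ^ 3 := by
  classical
  set Q : Finset (V × V) := Finset.univ.filter fun q : V × V =>
    P.rank q.1 q.2 + P.rank q.2 q.1 ≤ γ ∧
    ∃ u v : V, M u = some v ∧ P.BlockVia u v q.1 q.2 ∧ P.HarmlessFor γ q.1 q.2 with hQ
  -- step 1: the target set is covered by the image of Q under Sym2.mk
  have hsub : {p : Sym2 V | ∃ u' v' : V, p = s(u', v') ∧
      P.rank u' v' + P.rank v' u' ≤ γ ∧
      ∃ u v : V, M u = some v ∧ P.BlockVia u v u' v' ∧ P.HarmlessFor γ u' v'} ⊆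
      ↑(Q.image fun q : V × V => s(q.1, q.2)) := by
    rintro p ⟨u', v', rfl, h1, h2⟩
    simp only [Finset.coe_image, Set.mem_image, Finset.mem_coe]
    exact ⟨(u', v'), Finset.mem_filter.mpr ⟨Finset.mem_univ _, h1, h2⟩, rfl⟩
  have hcard1 : {p : Sym2 V | ∃ u' v' : V, p = s(u', v') ∧
      P.rank u' v' + P.rank v' u' ≤ γ ∧
      ∃ u v : V, M u = some v ∧ P.BlockVia u v u' v' ∧ P.HarmlessFor γ u' v'}.ncard
      ≤ Q.card := by
    calc _ ≤ (↑(Q.image fun q : V × V => s(q.1, q.2)) : Set (Sym2 V)).ncard :=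
          Set.ncard_le_ncard hsub (Finset.finite_toSet _)
      _ = (Q.image fun q : V × V => s(q.1, q.2)).card := Set.ncard_coe_finset _
      _ ≤ Q.card := Finset.card_image_le
  -- step 2: bound Q.card by (#culprits) * γ
  set C : Finset V := Finset.univ.filter fun u' : V =>
      ∃ u v v', M u = some v ∧ P.BlockVia u v u' v' with hC
  have hfib : ∀ q ∈ Q, q.1 ∈ C := by
    intro q hq
    obtain ⟨_, h1, u, v, hMu, hbv, _⟩ := Finset.mem_filter.mp hq
    exact Finset.mem_filter.mpr ⟨Finset.mem_univ _, u, v, q.2, hMu, hbv⟩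
  have hQcard : Q.card ≤ C.card * γ := by
    rw [Finset.card_eq_sum_card_fiberwise hfib]
    calc ∑ u' ∈ C, (Q.filter fun q => q.1 = u').card
        ≤ ∑ _u' ∈ C, γ := by
          refine Finset.sum_le_sum fun u' _ => ?_
          -- inject fiber into the harmless set via snd
          refine le_trans (Finset.card_le_card_of_injOn Prod.snd ?_ ?_)
            (harmless_card_le P γ u')
          · intro q hq
            obtain ⟨hqQ, hq1⟩ := Finset.mem_filter.mp hq
            obtain ⟨_, _, u, v, hMu, hbv, hharm⟩ := Finset.mem_filter.mp hqQ
            subst hq1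
            refine Finset.mem_filter.mpr ⟨Finset.mem_univ _, ?_, ?_, hharm⟩
            · exact hbv.2.1.1
            · -- rank q.1 q.2 ≥ 1 : u is strictly preferred to q.2 by q.1
              rw [rank_eq]
              refine Finset.card_pos.mpr ⟨u, Finset.mem_filter.mpr
                ⟨Finset.mem_univ _, hbv.2.2.2.2.2.2.1.2, hbv.2.2.2.2.2.2.2.2⟩⟩
          · intro a ha b hb hab
            have ha1 := (Finset.mem_filter.mp ha).2
            have hb1 := (Finset.mem_filter.mp hb).2
            exact Prod.ext (ha1.trans hb1.symm) hab
      _ = C.card * γ := by rw [Finset.sum_const, smul_eq_mul]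
  have hCcard : C.card ≤ γ := culprit_card_le P γ M hcost
  have : Q.card ≤ γ * γ := le_trans hQcard (Nat.mul_le_mul_right γ hCcard)
  have hfin : γ * γ ≤ γ ^ 3 := by
    rcases Nat.eq_zero_or_pos γ with rfl | hγ
    · simp
    · calc γ * γ = γ ^ 2 := (sq γ).symm
        _ ≤ γ ^ 3 := Nat.pow_le_pow_right hγ (by omega)
  omega
end

section
/- Let γ ∈ ℕ and let M be a stable matching of a preference profile P with egalitarian cost γ(M) ≤ γ. Then M has at most γ² culprits. -/
open StableRoommates Profile

theorem stmt_9 {V : Type*} [DecidableEq V] [Fintype V] (P : Profile V)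
    (γ : ℕ) (M : V → Option V) (hM : P.IsMatching M) (hstable : P.Stable M)
    (hcost : P.egalCost M ≤ γ) :
    {u' : V | P.Culprit M u'}.ncard ≤ γ ^ 2 := by
  classical
  set T : V → Finset V := fun u =>
    (M u).elim ∅ (fun v => Finset.univ.filter (fun z => z ∈ P.acc u ∧ P.SPref u z v)) with hT
  have hsub : (Finset.univ.filter (fun u' => P.Culprit M u')) ⊆ Finset.univ.biUnion T := by
    intro u' hu'
    simp only [Finset.mem_filter, Finset.mem_univ, true_and] at hu'
    obtain ⟨u, v, v', huv, hne, hbv⟩ := hu'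
    refine Finset.mem_biUnion.2 ⟨u, Finset.mem_univ _, ?_⟩
    simp only [hT, huv, Option.elim, Finset.mem_filter, Finset.mem_univ, true_and]
    exact ⟨hbv.2.2.2.2.2.2.1.1, hbv.2.2.2.2.2.2.2.1⟩
  have hTcard : ∀ u, (T u).card ≤ P.agentCost M u := by
    intro u
    cases huv : M u with
    | none => simp [hT, huv]
    | some v =>
      have h1 : ({z : V | z ∈ P.acc u ∧ P.SPref u z v} : Set V) =
          ↑(Finset.univ.filter (fun z => z ∈ P.acc u ∧ P.SPref u z v)) := by
        ext z; simp
      have : P.agentCost M u = (Finset.univ.filter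
          (fun z => z ∈ P.acc u ∧ P.SPref u z v)).card := by
        have h2 : P.agentCost M u = P.rank u v := by simp [Profile.agentCost, huv]
        rw [h2]; unfold Profile.rank; rw [h1, Set.ncard_coe_finset]
      rw [this]
      simp [hT, huv]
  have hC : ({u' : V | P.Culprit M u'} : Set V) =
      ↑(Finset.univ.filter (fun u' => P.Culprit M u')) := by ext z; simp
  rw [hC, Set.ncard_coe_finset]
  calc (Finset.univ.filter (fun u' => P.Culprit M u')).card
      ≤ (Finset.univ.biUnion T).card := Finset.card_le_card hsub
    _ ≤ ∑ u, (T u).card := Finset.card_biUnion_le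
    _ ≤ ∑ u, P.agentCost M u := Finset.sum_le_sum (fun u _ => hTcard u)
    _ ≤ γ := hcost
    _ ≤ γ ^ 2 := Nat.le_self_pow two_ne_zero γ
end

section
/- Let γ ∈ ℕ and let u, v, w be agents with v ≠ w such that {u,v} and {u,w} are both mutually acceptable pairs. If both pairs are critical for u and both have cost at most γ, then v ∼_u w, i.e., u is indifferent between v and w. -/
open StableRoommates Profile

lemma aux_strict {V : Type*} [DecidableEq V] [Fintype V] (P : Profile V)
    (γ : ℕ) (u v w : V)
    (hcritw : P.CriticalFor γ u w)
    (hcostv : P.rank u v ≤ γ)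
    (hwv : P.pref u w v) (hnot : ¬ P.pref u v w) : False := by
  have hsub : {x : V | x ∈ P.acc u ∧ x ≠ w ∧ P.pref u x w} ⊆
      {z : V | z ∈ P.acc u ∧ P.SPref u z v} := by
    rintro x ⟨hx, _, hxw⟩
    refine ⟨hx, P.pref_trans u x w v hxw hwv, fun hvx => hnot (P.pref_trans u v x w hvx hxw)⟩
  have := Set.ncard_le_ncard hsub (Set.toFinite _)
  have : γ < P.rank u v := lt_of_lt_of_le hcritw this
  omega

theorem stmt_10 {V : Type*} [DecidableEq V] [Fintype V] (P : Profile V)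
    (γ : ℕ) (u v w : V) (hvw : v ≠ w)
    (huv : P.MutAcc u v) (huw : P.MutAcc u w)
    (hcritv : P.CriticalFor γ u v) (hcritw : P.CriticalFor γ u w)
    (hcostv : P.rank u v + P.rank v u ≤ γ) (hcostw : P.rank u w + P.rank w u ≤ γ) :
    P.Tie u v w := by
  constructor
  · by_contra h
    have hwv : P.pref u w v := (P.pref_total u v huv.1 w huw.1).resolve_left h
    exact aux_strict P γ u v w hcritw (by omega) hwv h
  · by_contra h
    have hvw' : P.pref u v w := (P.pref_total u w huw.1 v huv.1).resolve_left h
    exact aux_strict P γ u w v hcritv (by omega) hvw' h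
end

section
/- Let P be a vertex-selection-gadget profile (as in the context, with parameter n' ≥ 1 and index arithmetic modulo 2n'+1). For every matching M of P there is an index i ∈ {0,…,2n'} such that M(a^i) ∉ A and the pair {a^{i−1}, a^i} blocks M; moreover, for such an i, if M(a^i) ≠ u^i, then additionally one of the pairs {a^i, c^i}, {a^i, d^i}, {c^i, d^i} blocks M, so M has at least two blocking pairs. -/
open StableRoommates Profile

/-- A vertex-selection-gadget profile with parameter `n'`: the agent set contains
pairwise disjoint families `a`, `u`, `c`, `d` indexed modulo `2n'+1`, with the
prescribed acceptability sets and strict preferences; the preferences of the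
agents `u i` and of any further agents are arbitrary. -/
structure SelGadget (V : Type*) [DecidableEq V] [Fintype V] (P : Profile V) (n' : ℕ) where
  a : ZMod (2 * n' + 1) → V
  u : ZMod (2 * n' + 1) → V
  c : ZMod (2 * n' + 1) → V
  d : ZMod (2 * n' + 1) → V
  inj : Function.Injective (fun p : ZMod (2 * n' + 1) × Fin 4 => ![a, u, c, d] p.2 p.1)
  acc_a : ∀ i, P.acc (a i) = {a (i + 1), a (i - 1), u i, c i, d i}
  pref_a1 : ∀ i, P.SPref (a i) (a (i + 1)) (a (i - 1))
  pref_a2 : ∀ i, P.SPref (a i) (a (i - 1)) (u i)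
  pref_a3 : ∀ i, P.SPref (a i) (u i) (c i)
  pref_a4 : ∀ i, P.SPref (a i) (c i) (d i)
  acc_c : ∀ i, P.acc (c i) = {d i, a i}
  pref_c : ∀ i, P.SPref (c i) (d i) (a i)
  acc_d : ∀ i, P.acc (d i) = {a i, c i}
  pref_d : ∀ i, P.SPref (d i) (a i) (c i)

theorem stmt_12 {V : Type*} [DecidableEq V] [Fintype V] (P : Profile V)
    (n' : ℕ) (hn' : 1 ≤ n') (G : SelGadget V P n')
    (M : V → Option V) (hM : P.IsMatching M) :
    ∃ i : ZMod (2 * n' + 1),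
      (∀ j, M (G.a i) ≠ some (G.a j)) ∧
      P.Blocks M (G.a (i - 1)) (G.a i) ∧
      (M (G.a i) ≠ some (G.u i) →
        (P.Blocks M (G.a i) (G.c i) ∨ P.Blocks M (G.a i) (G.d i) ∨
          P.Blocks M (G.c i) (G.d i))) := by

  classical
  -- basic helpers
  have strans : ∀ {i x y z : V}, P.SPref i x y → P.SPref i y z → P.SPref i x z := by
    intro i x y z h1 h2
    exact ⟨P.pref_trans i x y z h1.1 h2.1, fun h => h2.2 (P.pref_trans i z x y h h1.1)⟩
  have sne : ∀ {i x y : V}, P.SPref i x y → x ≠ y := by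
    rintro i x y h rfl; exact h.2 h.1
  have key : ∀ (k l : Fin 4) (i j : ZMod (2 * n' + 1)), k ≠ l →
      ![G.a, G.u, G.c, G.d] k i ≠ ![G.a, G.u, G.c, G.d] l j := by
    intro k l i j hkl h
    have := G.inj (a₁ := (i, k)) (a₂ := (j, l)) h
    exact hkl (congrArg Prod.snd this)
  have ainj : Function.Injective G.a := by
    intro i j h
    have := G.inj (a₁ := (i, (0 : Fin 4))) (a₂ := (j, (0 : Fin 4)))
      (by simpa using h)
    exact congrArg Prod.fst this
  have hcd : ∀ i j, G.c i ≠ G.d j := fun i j => key 2 3 i j (by decide)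
  have had : ∀ i j, G.a i ≠ G.d j := fun i j => key 0 3 i j (by decide)
  have hac : ∀ i j, G.a i ≠ G.c j := fun i j => key 0 2 i j (by decide)
  -- existence of a suitable index
  have hex : ∃ i, ∀ j, M (G.a i) ≠ some (G.a j) := by
    by_contra h
    push_neg at h
    choose σ hσ using h
    have hinv : ∀ i, σ (σ i) = i := by
      intro i
      have h1 := hM.symm _ _ (hσ i)
      have h2 := hσ (σ i)
      exact ainj (Option.some.inj (h2.symm.trans h1))
    have hne : ∀ i, σ i ≠ i := by
      intro i h
      have := (hM.mutacc _ _ (hσ i)).1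
      rw [h] at this
      exact P.not_self _ this
    let e : Equiv.Perm (ZMod (2 * n' + 1)) := ⟨σ, σ, hinv, hinv⟩
    have he : e ^ 2 ^ 1 = 1 := by
      ext i
      simp only [pow_one, pow_succ, pow_zero, one_mul, Equiv.Perm.mul_apply,
        Equiv.Perm.one_apply]
      exact hinv i
    have hodd : ¬ (2 ∣ Fintype.card (ZMod (2 * n' + 1))) := by
      rw [ZMod.card]; omega
    obtain ⟨x, hx⟩ := Equiv.Perm.exists_fixed_point_of_prime hodd he
    exact hne x hx
  obtain ⟨i, hi⟩ := hex
  refine ⟨i, hi, ?_, ?_⟩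
  · -- {a (i-1), a i} blocks M
    have hii : i - 1 + 1 = i := by ring
    have mem1 : G.a i ∈ P.acc (G.a (i - 1)) := by
      rw [G.acc_a, hii]; simp
    have mem2 : G.a (i - 1) ∈ P.acc (G.a i) := by
      rw [G.acc_a]; simp
    have hnot : M (G.a (i - 1)) ≠ some (G.a i) := by
      intro h
      exact hi (i - 1) (hM.symm _ _ h)
    refine ⟨⟨mem1, mem2⟩, hnot, ?_, ?_⟩
    · intro z hz
      have hzmem := (hM.mutacc _ _ hz).1
      rw [G.acc_a] at hzmem
      have s1 : P.SPref (G.a (i-1)) (G.a ((i-1)+1)) (G.a ((i-1)-1)) := G.pref_a1 (i-1)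
      rw [hii] at s1
      simp only [Finset.mem_insert, Finset.mem_singleton] at hzmem
      rcases hzmem with h | h | h | h | h
      · rw [hii] at h; exact absurd (h ▸ hz) hnot
      · exact h ▸ s1
      · exact h ▸ strans s1 (G.pref_a2 (i-1))
      · exact h ▸ strans s1 (strans (G.pref_a2 (i-1)) (G.pref_a3 (i-1)))
      · exact h ▸ strans s1 (strans (G.pref_a2 (i-1)) (strans (G.pref_a3 (i-1)) (G.pref_a4 (i-1))))
    · intro z hz
      have hzmem := (hM.mutacc _ _ hz).1
      rw [G.acc_a] at hzmem
      simp only [Finset.mem_insert, Finset.mem_singleton] at hzmem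
      rcases hzmem with h | h | h | h | h
      · exact absurd (h ▸ hz) (hi (i+1))
      · exact absurd (h ▸ hz) (hi (i-1))
      · exact h ▸ G.pref_a2 i
      · exact h ▸ strans (G.pref_a2 i) (G.pref_a3 i)
      · exact h ▸ strans (G.pref_a2 i) (strans (G.pref_a3 i) (G.pref_a4 i))
  · -- second part
    intro hu
    have macAC : P.MutAcc (G.a i) (G.c i) := by
      constructor
      · rw [G.acc_a]; simp
      · rw [G.acc_c]; simp
    have macAD : P.MutAcc (G.a i) (G.d i) := by
      constructor
      · rw [G.acc_a]; simp
      · rw [G.acc_d]; simp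
    have macCD : P.MutAcc (G.c i) (G.d i) := by
      constructor
      · rw [G.acc_c]; simp
      · rw [G.acc_d]; simp
    rcases ha : M (G.a i) with _ | z
    · -- a i unmatched
      rcases hc : M (G.c i) with _ | w
      · -- c i unmatched: {a i, c i} blocks
        refine Or.inl ⟨macAC, by simp [ha], ?_, ?_⟩
        · intro z hz; rw [ha] at hz; exact absurd hz (by simp)
        · intro z hz; rw [hc] at hz; exact absurd hz (by simp)
      · have hwmem := (hM.mutacc _ _ hc).1
        rw [G.acc_c] at hwmem
        simp only [Finset.mem_insert, Finset.mem_singleton] at hwmem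
        rcases hwmem with rfl | rfl
        · -- M (c i) = d i : {a i, d i} blocks
          refine Or.inr (Or.inl ⟨macAD, by simp [ha], ?_, ?_⟩)
          · intro z hz; rw [ha] at hz; exact absurd hz (by simp)
          · intro z hz
            have := hM.symm _ _ hc
            rw [this] at hz
            exact (Option.some.inj hz) ▸ G.pref_d i
        · -- M (c i) = a i contradicts M (a i) = none
          have := hM.symm _ _ hc
          rw [ha] at this; exact absurd this (by simp)
    · -- a i matched to z
      have hzmem := (hM.mutacc _ _ ha).1
      rw [G.acc_a] at hzmem
      simp only [Finset.mem_insert, Finset.mem_singleton] at hzmem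
      rcases hzmem with rfl | rfl | rfl | rfl | rfl
      · exact absurd ha (hi (i+1))
      · exact absurd ha (hi (i-1))
      · exact absurd ha hu
      · -- M (a i) = c i : {c i, d i} blocks (d i must be unmatched)
        have hca : M (G.c i) = some (G.a i) := hM.symm _ _ ha
        have hd : M (G.d i) = none := by
          rcases hdd : M (G.d i) with _ | w
          · rfl
          · have hwmem := (hM.mutacc _ _ hdd).1
            rw [G.acc_d] at hwmem
            simp only [Finset.mem_insert, Finset.mem_singleton] at hwmem
            rcases hwmem with rfl | rfl
            · have := hM.symm _ _ hdd
              rw [ha] at this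
              exact absurd (Option.some.inj this) (hcd i i)
            · have := hM.symm _ _ hdd
              rw [hca] at this
              exact absurd (Option.some.inj this) (had i i)
        refine Or.inr (Or.inr ⟨macCD, ?_, ?_, ?_⟩)
        · rw [hca]; intro h; exact (had i i) (Option.some.inj h)
        · intro z hz
          rw [hca] at hz
          exact (Option.some.inj hz) ▸ G.pref_c i
        · intro z hz; rw [hd] at hz; exact absurd hz (by simp)
      · -- M (a i) = d i : {a i, c i} blocks (c i must be unmatched)
        have hda : M (G.d i) = some (G.a i) := hM.symm _ _ ha
        have hc : M (G.c i) = none := by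
          rcases hcc : M (G.c i) with _ | w
          · rfl
          · have hwmem := (hM.mutacc _ _ hcc).1
            rw [G.acc_c] at hwmem
            simp only [Finset.mem_insert, Finset.mem_singleton] at hwmem
            rcases hwmem with rfl | rfl
            · have := hM.symm _ _ hcc
              rw [hda] at this
              exact absurd (Option.some.inj this) (hac i i)
            · have := hM.symm _ _ hcc
              rw [ha] at this
              exact absurd (Option.some.inj this) (hcd i i).symm
        refine Or.inl ⟨macAC, ?_, ?_, ?_⟩
        · rw [ha]; intro h; exact (hcd i i) (Option.some.inj h).symm
        · intro z hz
          rw [ha] at hz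
          exact (Option.some.inj hz) ▸ G.pref_a4 i
        · intro z hz; rw [hc] at hz; exact absurd hz (by simp)
end

section
/- Let P be a vertex-selection-gadget profile (as in the context, with parameter n' ≥ 1 and index arithmetic modulo 2n'+1). Let M be a matching of P such that, for some i ∈ {0,…,2n'}, M(a^i) = u^i, and moreover (i) M(a^{i+2z−1}) = a^{i+2z} for every z ∈ {1,…,n'} and (ii) M(c^{z'}) = d^{z'} for every z' ∈ {0,…,2n'}. Then the pair {a^{i−1}, a^i} blocks M, and it is the only pair blocking M that contains an agent of A ∪ C ∪ D. -/
open StableRoommates Profile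

theorem stmt_13 {V : Type*} [DecidableEq V] [Fintype V] (P : Profile V)
    (n' : ℕ) (hn' : 1 ≤ n') (G : SelGadget V P n')
    (M : V → Option V) (hM : P.IsMatching M)
    (i : ZMod (2 * n' + 1)) (hi : M (G.a i) = some (G.u i))
    (h1 : ∀ z : ℕ, 1 ≤ z → z ≤ n' →
      M (G.a (i + ((2 * z - 1 : ℕ) : ZMod (2 * n' + 1)))) =
        some (G.a (i + ((2 * z : ℕ) : ZMod (2 * n' + 1)))))
    (h2 : ∀ z' : ZMod (2 * n' + 1), M (G.c z') = some (G.d z')) :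
    P.Blocks M (G.a (i - 1)) (G.a i) ∧
    ∀ x y : V, P.Blocks M x y →
      ((∃ j, x = G.a j ∨ x = G.c j ∨ x = G.d j) ∨
        (∃ j, y = G.a j ∨ y = G.c j ∨ y = G.d j)) →
      ((x = G.a (i - 1) ∧ y = G.a i) ∨ (x = G.a i ∧ y = G.a (i - 1))) := by
  haveI : NeZero (2 * n' + 1) := ⟨by omega⟩
  -- strict preference helper facts
  have sprefT : ∀ x y z w, P.SPref x y z → P.SPref x z w → P.SPref x y w := by
    rintro x y z w ⟨p1, p2⟩ ⟨p3, p4⟩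
    exact ⟨P.pref_trans _ _ _ _ p1 p3, fun h => p4 (P.pref_trans _ _ _ _ h p1)⟩
  have pa02 : ∀ j, P.SPref (G.a j) (G.a (j + 1)) (G.u j) :=
    fun j => sprefT _ _ _ _ (G.pref_a1 j) (G.pref_a2 j)
  have pa03 : ∀ j, P.SPref (G.a j) (G.a (j + 1)) (G.c j) :=
    fun j => sprefT _ _ _ _ (pa02 j) (G.pref_a3 j)
  have pa04 : ∀ j, P.SPref (G.a j) (G.a (j + 1)) (G.d j) :=
    fun j => sprefT _ _ _ _ (pa03 j) (G.pref_a4 j)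
  have pa13 : ∀ j, P.SPref (G.a j) (G.a (j - 1)) (G.c j) :=
    fun j => sprefT _ _ _ _ (G.pref_a2 j) (G.pref_a3 j)
  have pa14 : ∀ j, P.SPref (G.a j) (G.a (j - 1)) (G.d j) :=
    fun j => sprefT _ _ _ _ (pa13 j) (G.pref_a4 j)
  have paud : ∀ j, P.SPref (G.a j) (G.u j) (G.d j) :=
    fun j => sprefT _ _ _ _ (G.pref_a3 j) (G.pref_a4 j)
  -- injectivity consequences
  have key : ∀ (s t : Fin 4) (j k : ZMod (2 * n' + 1)),
      ![G.a, G.u, G.c, G.d] s j = ![G.a, G.u, G.c, G.d] t k → s = t ∧ j = k := by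
    intro s t j k h
    have h2 := @G.inj (j, s) (k, t) h
    exact ⟨congrArg Prod.snd h2, congrArg Prod.fst h2⟩
  have a_inj : ∀ {j k}, G.a j = G.a k → j = k := fun {j k} h => (key 0 0 j k h).2
  have ne_da : ∀ j k, G.d j ≠ G.a k := by
    intro j k h
    have := (key 3 0 j k h).1
    exact absurd this (by decide)
  have symm2 : ∀ z', M (G.d z') = some (G.c z') := fun z' => hM.symm _ _ (h2 z')
  -- the partner of a j for j ≠ i
  have partner : ∀ j : ZMod (2 * n' + 1), j ≠ i →
      M (G.a j) = some (G.a (j + 1)) ∨ M (G.a j) = some (G.a (j - 1)) := by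
    intro j hji
    have hvlt : (j - i).val < 2 * n' + 1 := ZMod.val_lt _
    have hvne : (j - i).val ≠ 0 := by
      intro h0
      exact hji (sub_eq_zero.mp ((ZMod.val_eq_zero _).mp h0))
    have hj' : j = i + ((j - i).val : ZMod (2 * n' + 1)) := by
      rw [ZMod.natCast_val, ZMod.cast_id]; ring
    rcases Nat.even_or_odd ((j - i).val) with he | ho
    · obtain ⟨z, hz⟩ := he
      have happ := h1 z (by omega) (by omega)
      have e1 : i + ((2 * z : ℕ) : ZMod (2 * n' + 1)) = j := by
        rw [show 2 * z = (j - i).val by omega]; exact hj'.symm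
      have e2 : i + ((2 * z - 1 : ℕ) : ZMod (2 * n' + 1)) = j - 1 := by
        rw [Nat.cast_sub (by omega), Nat.cast_one, ← e1]; ring
      right
      have hs := hM.symm _ _ happ
      rw [e1, e2] at hs
      exact hs
    · obtain ⟨z, hz⟩ := ho
      have happ := h1 (z + 1) (by omega) (by omega)
      have e1 : i + ((2 * (z + 1) - 1 : ℕ) : ZMod (2 * n' + 1)) = j := by
        rw [show 2 * (z + 1) - 1 = (j - i).val by omega]; exact hj'.symm
      have e2 : i + ((2 * (z + 1) : ℕ) : ZMod (2 * n' + 1)) = j + 1 := by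
        rw [show (2 * (z + 1) : ℕ) = (j - i).val + 1 by omega, Nat.cast_add, Nat.cast_one,
          ZMod.natCast_val, ZMod.cast_id]
        ring
      left
      rw [e1, e2] at happ
      exact happ
  have getz : ∀ j : ZMod (2 * n' + 1), ∃ z, M (G.a j) = some z := by
    intro j
    by_cases hji : j = i
    · exact ⟨_, by rw [hji, hi]⟩
    · rcases partner j hji with hp | hp
      exacts [⟨_, hp⟩, ⟨_, hp⟩]
  -- what a j can strictly prefer to its partner
  have aKey : ∀ j z w, M (G.a j) = some z → w ∈ P.acc (G.a j) → P.SPref (G.a j) w z →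
      w = G.a (j + 1) ∨ (j = i ∧ w = G.a (j - 1)) := by
    intro j z w hz hw hsw
    rw [G.acc_a] at hw
    simp only [Finset.mem_insert, Finset.mem_singleton] at hw
    by_cases hji : j = i
    · subst hji
      obtain rfl := Option.some.inj (hi.symm.trans hz)
      rcases hw with rfl | rfl | rfl | rfl | rfl
      · exact Or.inl rfl
      · exact Or.inr ⟨rfl, rfl⟩
      · exact absurd hsw.1 hsw.2
      · exact absurd (G.pref_a3 j).1 hsw.2
      · exact absurd (paud j).1 hsw.2
    · rcases partner j hji with hp | hp
      · obtain rfl := Option.some.inj (hp.symm.trans hz)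
        rcases hw with rfl | rfl | rfl | rfl | rfl
        · exact absurd hsw.1 hsw.2
        · exact absurd (G.pref_a1 j).1 hsw.2
        · exact absurd (pa02 j).1 hsw.2
        · exact absurd (pa03 j).1 hsw.2
        · exact absurd (pa04 j).1 hsw.2
      · obtain rfl := Option.some.inj (hp.symm.trans hz)
        rcases hw with rfl | rfl | rfl | rfl | rfl
        · exact Or.inl rfl
        · exact absurd hsw.1 hsw.2
        · exact absurd (G.pref_a2 j).1 hsw.2
        · exact absurd (pa13 j).1 hsw.2
        · exact absurd (pa14 j).1 hsw.2
  have cKey : ∀ j w, w ∈ P.acc (G.c j) → ¬ P.SPref (G.c j) w (G.d j) := by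
    intro j w hw hsw
    rw [G.acc_c] at hw
    simp only [Finset.mem_insert, Finset.mem_singleton] at hw
    rcases hw with rfl | rfl
    · exact hsw.2 hsw.1
    · exact hsw.2 (G.pref_c j).1
  have dKey : ∀ j w, w ∈ P.acc (G.d j) → P.SPref (G.d j) w (G.c j) → w = G.a j := by
    intro j w hw hsw
    rw [G.acc_d] at hw
    simp only [Finset.mem_insert, Finset.mem_singleton] at hw
    rcases hw with rfl | rfl
    · rfl
    · exact absurd hsw.1 hsw.2
  -- the actual partner of a (i - 1)
  have hpart : M (G.a (i - 1)) = some (G.a (i - 2)) := by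
    have happ := h1 n' hn' le_rfl
    have c0 : ((2 * n' + 1 : ℕ) : ZMod (2 * n' + 1)) = 0 := ZMod.natCast_self _
    have c1 : ((2 * n' : ℕ) : ZMod (2 * n' + 1)) = -1 := by
      push_cast at c0 ⊢
      linear_combination c0
    have c2 : ((2 * n' - 1 : ℕ) : ZMod (2 * n' + 1)) = -2 := by
      rw [Nat.cast_sub (by omega), c1, Nat.cast_one]; ring
    rw [c1, c2] at happ
    have hs := hM.symm _ _ happ
    rw [show i - 1 = i + -1 by ring, show i - 2 = i + -2 by ring]
    exact hs
  have two_ne : i - 2 ≠ i := by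
    intro h
    have h2 : ((2 : ℕ) : ZMod (2 * n' + 1)) = 0 := by
      push_cast
      linear_combination -h
    have hv : ((2 : ℕ) : ZMod (2 * n' + 1)).val = 2 := ZMod.val_cast_of_lt (by omega)
    rw [h2, ZMod.val_zero] at hv
    exact absurd hv (by omega)
  -- the pair blocks
  have hblocks : P.Blocks M (G.a (i - 1)) (G.a i) := by
    refine ⟨⟨?_, ?_⟩, ?_, ?_, ?_⟩
    · rw [G.acc_a, Finset.mem_insert]
      exact Or.inl (congrArg G.a (by ring))
    · rw [G.acc_a]
      simp
    · rw [hpart]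
      intro h
      exact two_ne (a_inj (Option.some.inj h))
    · intro z hz
      rw [hpart] at hz
      obtain rfl := Option.some.inj hz.symm
      have h := G.pref_a1 (i - 1)
      rw [show i - 1 + 1 = i by ring, show i - 1 - 1 = i - 2 by ring] at h
      exact h
    · intro z hz
      rw [hi] at hz
      obtain rfl := Option.some.inj hz.symm
      exact G.pref_a2 i
  have bsymm : ∀ x y, P.Blocks M x y → P.Blocks M y x := by
    rintro x y ⟨hma, hne, hx, hy⟩
    exact ⟨⟨hma.2, hma.1⟩, fun h => hne (hM.symm _ _ h), hy, hx⟩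
  have main : ∀ x y, P.Blocks M x y → (∃ j, x = G.a j ∨ x = G.c j ∨ x = G.d j) →
      (x = G.a (i - 1) ∧ y = G.a i) ∨ (x = G.a i ∧ y = G.a (i - 1)) := by
    rintro x y ⟨hma, hne, hx, hy⟩ ⟨j, hj⟩
    rcases hj with rfl | rfl | rfl
    · -- x = a j
      obtain ⟨z, hz⟩ := getz j
      rcases aKey j z y hz hma.1 (hx z hz) with rfl | ⟨rfl, rfl⟩
      · by_cases hji1 : j + 1 = i
        · left
          exact ⟨congrArg G.a (by linear_combination hji1), congrArg G.a hji1⟩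
        · exfalso
          rcases partner (j + 1) hji1 with hp | hp
          · have h := hy _ hp
            have hpa := G.pref_a1 (j + 1)
            rw [show j + 1 - 1 = j by ring] at hpa
            exact h.2 hpa.1
          · rw [show j + 1 - 1 = j by ring] at hp
            exact hne (hM.symm _ _ hp)
      · exact Or.inr ⟨rfl, rfl⟩
    · -- x = c j
      exact absurd (hx _ (h2 j)) (cKey j y hma.1)
    · -- x = d j
      obtain rfl := dKey j y hma.1 (hx _ (symm2 j))
      obtain ⟨z, hz⟩ := getz j
      rcases aKey j z (G.d j) hz hma.2 (hy z hz) with h | ⟨_, h⟩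
      · exact absurd h (ne_da _ _)
      · exact absurd h (ne_da _ _)
  refine ⟨hblocks, ?_⟩
  intro x y hb hmem
  rcases hmem with ⟨j, hj⟩ | ⟨j, hj⟩
  · exact main x y hb ⟨j, hj⟩
  · rcases main y x (bsymm x y hb) ⟨j, hj⟩ with ⟨e1, e2⟩ | ⟨e1, e2⟩
    · exact Or.inr ⟨e2, e1⟩
    · exact Or.inl ⟨e2, e1⟩
end

section
/- Let P be a vertex-selection-gadget profile (as in the context, with parameter n' ≥ 1 and index arithmetic modulo 2n'+1). Call an agent a blocking agent of a matching M if it belongs to some pair blocking M. Then for every matching M of P: (1) there is an index i ∈ {0,…,2n'} such that a^{i−1} and a^i are both blocking agents of M, so M has at least two blocking agents; and (2) if M(a^i) ≠ u^i for every i ∈ {0,…,2n'}, then M has at least three blocking agents. -/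
open StableRoommates Profile

/-- An agent is a blocking agent of `M` if it belongs to some pair blocking `M`. -/
def IsBlockingAgent {V : Type*} [DecidableEq V] [Fintype V] (P : Profile V)
    (M : V → Option V) (x : V) : Prop :=
  ∃ y, P.Blocks M x y ∨ P.Blocks M y x

/-!
Call `i` forward if `M (a i) = a (i + 1)`. If `i` is forward then `a (i + 1)` is matched to
`a i ≠ a (i + 2)`, so `i + 1` is not; on the odd cycle `ZMod (2n' + 1)` the forward indices
cannot alternate, hence some `i` and `i + 1` are both not forward. Then `{a i, a (i + 1)}` blocks
`M`: `a (i + 1)` is the first choice of `a i`, and `a i` is the second choice of `a (i + 1)`,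
whose partner is not its first choice.
If moreover `a (i + 1)` is not matched to `u (i + 1)`, it is unmatched or matched to `c (i + 1)`
or `d (i + 1)`, and in each case the triangle `a, c, d` of index `i + 1` contains a blocking pair
through `c (i + 1)` or `d (i + 1)`: a third blocking agent.
-/

namespace StableRoommates.Profile

variable {V : Type*} [DecidableEq V] [Fintype V] {P : Profile V}

theorem SPref.trans {i x y z : V} (hxy : P.SPref i x y) (hyz : P.SPref i y z) :
    P.SPref i x z :=
  ⟨P.pref_trans i x y z hxy.1 hyz.1, fun hzx => hyz.2 (P.pref_trans i z x y hzx hxy.1)⟩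

theorem SPref.ne {i x y : V} (h : P.SPref i x y) : x ≠ y := by
  rintro rfl
  exact h.2 h.1

theorem ne_of_mem_acc {x y : V} (h : y ∈ P.acc x) : x ≠ y := by
  rintro rfl
  exact P.not_self x h

namespace IsMatching

variable {M : V → Option V}

theorem mem_acc (hM : P.IsMatching M) {x y : V} (h : M x = some y) : y ∈ P.acc x :=
  (hM.mutacc x y h).1

theorem eq_of_eq_some (hM : P.IsMatching M) {x y z : V} (hx : M x = some z)
    (hy : M y = some z) : x = y :=
  Option.some.inj ((hM.symm x z hx).symm.trans (hM.symm y z hy))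

end IsMatching

end StableRoommates.Profile

/-- An odd cycle has no proper 2-colouring. -/
theorem ZMod.exists_succ_iff (n : ℕ) (p : ZMod (2 * n + 1) → Prop) :
    ∃ i, p (i + 1) ↔ p i := by
  by_contra! h
  have hp : ∀ i, p (i + 1) ↔ ¬ p i := fun i => by
    have := h i
    tauto
  have heven : ∀ k : ℕ, p (2 * k : ℕ) ↔ p 0 := by
    intro k
    induction k with
    | zero => simp
    | succ k ih =>
      have hk : ((2 * (k + 1) : ℕ) : ZMod (2 * n + 1)) = (2 * k : ℕ) + 1 + 1 := by
        push_cast; ring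
      rw [hk, hp, hp, not_not, ih]
  have hwrap : ((2 * (n + 1) : ℕ) : ZMod (2 * n + 1)) = 0 + 1 := by
    rw [show 2 * (n + 1) = (2 * n + 1) + 1 by ring, Nat.cast_add, ZMod.natCast_self,
      Nat.cast_one]
  have h1 := heven (n + 1)
  rw [hwrap, hp] at h1
  tauto

namespace SelGadget

variable {V : Type*} [DecidableEq V] [Fintype V] {P : Profile V} {n' : ℕ}
  (G : SelGadget V P n') {M : V → Option V}

theorem family_ne {i k : ZMod (2 * n' + 1)} {s t : Fin 4} (hst : s ≠ t) :
    ![G.a, G.u, G.c, G.d] s i ≠ ![G.a, G.u, G.c, G.d] t k :=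
  fun h => hst (congrArg Prod.snd (G.inj (a₁ := (i, s)) (a₂ := (k, t)) h))

theorem a_ne_c (i k : ZMod (2 * n' + 1)) : G.a i ≠ G.c k :=
  G.family_ne (s := 0) (t := 2) (by decide)

theorem a_ne_d (i k : ZMod (2 * n' + 1)) : G.a i ≠ G.d k :=
  G.family_ne (s := 0) (t := 3) (by decide)

theorem c_ne_d (i k : ZMod (2 * n' + 1)) : G.c i ≠ G.d k :=
  G.family_ne (s := 2) (t := 3) (by decide)

theorem mutAcc_a_succ (i : ZMod (2 * n' + 1)) : P.MutAcc (G.a i) (G.a (i + 1)) := by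
  refine ⟨by simp [G.acc_a], ?_⟩
  rw [G.acc_a, add_sub_cancel_right]
  simp

theorem a_ne_a_succ (i : ZMod (2 * n' + 1)) : G.a i ≠ G.a (i + 1) :=
  Profile.ne_of_mem_acc (G.mutAcc_a_succ i).1

theorem spref_a_succ {i : ZMod (2 * n' + 1)} {z : V} (hz : z ∈ P.acc (G.a i))
    (hne : z ≠ G.a (i + 1)) : P.SPref (G.a i) (G.a (i + 1)) z := by
  have h2 := G.pref_a1 i
  have h3 := h2.trans (G.pref_a2 i)
  have h4 := h3.trans (G.pref_a3 i)
  have h5 := h4.trans (G.pref_a4 i)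
  rw [G.acc_a] at hz
  simp only [Finset.mem_insert, Finset.mem_singleton] at hz
  rcases hz with rfl | rfl | rfl | rfl | rfl <;>
    first | exact absurd rfl hne | assumption

theorem spref_a_pred {i : ZMod (2 * n' + 1)} {z : V} (hz : z ∈ P.acc (G.a i))
    (hne₁ : z ≠ G.a (i + 1)) (hne₂ : z ≠ G.a (i - 1)) :
    P.SPref (G.a i) (G.a (i - 1)) z := by
  have h3 := G.pref_a2 i
  have h4 := h3.trans (G.pref_a3 i)
  have h5 := h4.trans (G.pref_a4 i)
  rw [G.acc_a] at hz
  simp only [Finset.mem_insert, Finset.mem_singleton] at hz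
  rcases hz with rfl | rfl | rfl | rfl | rfl <;>
    first | exact absurd rfl hne₁ | exact absurd rfl hne₂ | assumption

theorem exists_consecutive_not_matched_succ (hM : P.IsMatching M) :
    ∃ i, M (G.a i) ≠ some (G.a (i + 1)) ∧ M (G.a (i + 1)) ≠ some (G.a (i + 1 + 1)) := by
  have hforward : ∀ i, M (G.a i) = some (G.a (i + 1)) →
      M (G.a (i + 1)) ≠ some (G.a (i + 1 + 1)) := by
    intro i hi hi'
    have hne := (G.pref_a1 (i + 1)).ne
    rw [add_sub_cancel_right] at hne
    exact hne (Option.some.inj ((hM.symm _ _ hi).symm.trans hi')).symm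
  obtain ⟨i, hi⟩ := ZMod.exists_succ_iff n' fun i => M (G.a i) = some (G.a (i + 1))
  by_cases h : M (G.a i) = some (G.a (i + 1))
  · exact absurd (hi.mpr h) (hforward i h)
  · exact ⟨i, h, fun h' => h (hi.mp h')⟩

theorem blocks_a_succ (hM : P.IsMatching M) {i : ZMod (2 * n' + 1)}
    (hi : M (G.a i) ≠ some (G.a (i + 1))) (hi' : M (G.a (i + 1)) ≠ some (G.a (i + 1 + 1))) :
    P.Blocks M (G.a i) (G.a (i + 1)) := by
  refine ⟨G.mutAcc_a_succ i, hi, fun z hz => ?_, fun z hz => ?_⟩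
  · exact G.spref_a_succ (hM.mem_acc hz) (by rintro rfl; exact hi hz)
  · have hback : M (G.a (i + 1)) ≠ some (G.a i) := fun h => hi (hM.symm _ _ h)
    have h := G.spref_a_pred (hM.mem_acc hz) (by rintro rfl; exact hi' hz)
      (by rw [add_sub_cancel_right]; rintro rfl; exact hback hz)
    rwa [add_sub_cancel_right] at h

theorem blocks_a_d_of_unmatched (hM : P.IsMatching M) {j : ZMod (2 * n' + 1)}
    (hj : M (G.a j) = none) : P.Blocks M (G.a j) (G.d j) := by
  refine ⟨⟨by simp [G.acc_a], by simp [G.acc_d]⟩, by simp [hj], by simp [hj],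
    fun z hz => ?_⟩
  have hz' := hM.mem_acc hz
  simp only [G.acc_d, Finset.mem_insert, Finset.mem_singleton] at hz'
  rcases hz' with rfl | rfl
  · simp [hM.symm _ _ hz] at hj
  · exact G.pref_d j

theorem blocks_c_d_of_matched_c (hM : P.IsMatching M) {j : ZMod (2 * n' + 1)}
    (hj : M (G.a j) = some (G.c j)) : P.Blocks M (G.c j) (G.d j) := by
  have hc := hM.symm _ _ hj
  refine ⟨⟨by simp [G.acc_c], by simp [G.acc_d]⟩, ?_, fun z hz => ?_, fun z hz => ?_⟩
  · simpa [hc] using G.a_ne_d j j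
  · obtain rfl := Option.some.inj (hc.symm.trans hz)
    exact G.pref_c j
  · have hz' := hM.mem_acc hz
    simp only [G.acc_d, Finset.mem_insert, Finset.mem_singleton] at hz'
    rcases hz' with rfl | rfl
    · exact absurd (Option.some.inj (hj.symm.trans (hM.symm _ _ hz))) (G.c_ne_d j j)
    · exact absurd (hM.eq_of_eq_some hz hj) (G.a_ne_d j j).symm

theorem blocks_a_c_of_matched_d (hM : P.IsMatching M) {j : ZMod (2 * n' + 1)}
    (hj : M (G.a j) = some (G.d j)) : P.Blocks M (G.a j) (G.c j) := by
  have hd := hM.symm _ _ hj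
  refine ⟨⟨by simp [G.acc_a], by simp [G.acc_c]⟩, ?_, fun z hz => ?_, fun z hz => ?_⟩
  · simpa [hj] using (G.c_ne_d j j).symm
  · obtain rfl := Option.some.inj (hj.symm.trans hz)
    exact G.pref_a4 j
  · have hz' := hM.mem_acc hz
    simp only [G.acc_c, Finset.mem_insert, Finset.mem_singleton] at hz'
    rcases hz' with rfl | rfl
    · exact absurd (Option.some.inj (hd.symm.trans (hM.symm _ _ hz))) (G.a_ne_c j j)
    · exact absurd (hM.eq_of_eq_some hz hd) (G.c_ne_d j j)

theorem exists_blocking_agent_ne_a (hM : P.IsMatching M) {j : ZMod (2 * n' + 1)}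
    (hsucc : M (G.a j) ≠ some (G.a (j + 1))) (hpred : M (G.a j) ≠ some (G.a (j - 1)))
    (hu : M (G.a j) ≠ some (G.u j)) :
    ∃ w, IsBlockingAgent P M w ∧ ∀ k, G.a k ≠ w := by
  cases hj : M (G.a j) with
  | none =>
    exact ⟨G.d j, ⟨G.a j, Or.inr (G.blocks_a_d_of_unmatched hM hj)⟩, (G.a_ne_d · j)⟩
  | some z =>
    have hz := hM.mem_acc hj
    simp only [G.acc_a, Finset.mem_insert, Finset.mem_singleton] at hz
    rcases hz with rfl | rfl | rfl | rfl | rfl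
    · exact absurd hj hsucc
    · exact absurd hj hpred
    · exact absurd hj hu
    · exact ⟨G.d j, ⟨G.c j, Or.inr (G.blocks_c_d_of_matched_c hM hj)⟩, (G.a_ne_d · j)⟩
    · exact ⟨G.c j, ⟨G.a j, Or.inr (G.blocks_a_c_of_matched_d hM hj)⟩, (G.a_ne_c · j)⟩

end SelGadget

theorem stmt_15_general {V : Type*} [DecidableEq V] [Fintype V] (P : Profile V)
    (n' : ℕ) (G : SelGadget V P n')
    (M : V → Option V) (hM : P.IsMatching M) :
    (∃ i : ZMod (2 * n' + 1),
      IsBlockingAgent P M (G.a (i - 1)) ∧ IsBlockingAgent P M (G.a i)) ∧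
    2 ≤ {x : V | IsBlockingAgent P M x}.ncard ∧
    ((∀ i : ZMod (2 * n' + 1), M (G.a i) ≠ some (G.u i)) →
      3 ≤ {x : V | IsBlockingAgent P M x}.ncard) := by
  obtain ⟨i, hi, hi'⟩ := G.exists_consecutive_not_matched_succ hM
  have hblock := G.blocks_a_succ hM hi hi'
  have ha : IsBlockingAgent P M (G.a i) := ⟨_, Or.inl hblock⟩
  have ha' : IsBlockingAgent P M (G.a (i + 1)) := ⟨_, Or.inr hblock⟩
  refine ⟨⟨i + 1, by rwa [add_sub_cancel_right], ha'⟩,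
    (Set.one_lt_ncard_iff).mpr ⟨_, _, ha, ha', G.a_ne_a_succ i⟩, fun hu => ?_⟩
  have hback : M (G.a (i + 1)) ≠ some (G.a (i + 1 - 1)) := by
    rw [add_sub_cancel_right]
    exact fun h => hi (hM.symm _ _ h)
  obtain ⟨w, hw, hwa⟩ := G.exists_blocking_agent_ne_a hM hi' hback (hu (i + 1))
  exact (Set.two_lt_ncard_iff).mpr ⟨_, _, _, ha, ha', hw, G.a_ne_a_succ i, hwa i, hwa (i + 1)⟩

theorem stmt_15 {V : Type*} [DecidableEq V] [Fintype V] (P : Profile V)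
    (n' : ℕ) (hn' : 1 ≤ n') (G : SelGadget V P n')
    (M : V → Option V) (hM : P.IsMatching M) :
    (∃ i : ZMod (2 * n' + 1),
      IsBlockingAgent P M (G.a (i - 1)) ∧ IsBlockingAgent P M (G.a i)) ∧
    2 ≤ {x : V | IsBlockingAgent P M x}.ncard ∧
    ((∀ i : ZMod (2 * n' + 1), M (G.a i) ≠ some (G.u i)) →
      3 ≤ {x : V | IsBlockingAgent P M x}.ncard) :=
  stmt_15_general P n' G M hM
end

section
/- Let P be a preference profile on a set V of agents with |V| even in which every agent has at least one acceptable agent, and let γ ∈ ℕ. Set k = γ if γ is even and k = γ − 1 otherwise, and let V* = {b ∈ V : |V_b| ≤ γ}. Let A = {a_1,…,a_k} be k new agents, and define the profile P' on V ∪ A as follows: every agent of V \ V* keeps its preference list from P; each a ∈ A has acceptable set (A \ {a}) ∪ V*, with all of its acceptable agents mutually tied; and each b ∈ V* extends its preference list from P by appending all agents of A, tied with each other and strictly below every agent of V_b. Then P admits a stable matching of egalitarian cost at most γ if and only if P' admits a perfect stable matching of egalitarian cost at most γ. -/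
open StableRoommates Profile

/-!
In a stable matching `M` of `P` of cost at most `γ`, every unmatched agent `b` contributes
`|V_b| ≥ 1` to the cost, so the unmatched agents lie in `V*` and there are at most `γ` of them;
as matched agents come in pairs and `|V|` is even, their number is even, hence at most `k`.
Matching them to distinct new agents and pairing the remaining new agents among themselves gives
a perfect matching of `P'` of the same cost: new agents are indifferent, so they cost nothing and
never block, and an agent `b ∈ V*` gives every new agent rank exactly `|V_b|`. Conversely, since
agents of `V*` prefer each of their original acceptable agents to every new agent, discarding
the pairs containing a new agent from a perfect stable matching of `P'` leaves a stable matching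
of `P` whose cost is no larger.
-/

namespace StableRoommates

open Finset Sum

section Matchings

variable {V : Type*} [Fintype V]

def unmatched (M : V → Option V) : Finset V := univ.filter (M · = none)

@[simp]
theorem mem_unmatched {M : V → Option V} {v : V} : v ∈ unmatched M ↔ M v = none := by
  simp [unmatched]

namespace Profile

variable [DecidableEq V] {P : Profile V} {M : V → Option V}

def Indifferent (P : Profile V) (i : V) : Prop := ∀ x ∈ P.acc i, ∀ y ∈ P.acc i, P.pref i x y

theorem IsMatching.ne_self (hM : P.IsMatching M) (x : V) : M x ≠ some x :=
  fun h => P.not_self x (hM.mutacc x x h).1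

theorem IsMatching.card_unmatched_modEq (hM : P.IsMatching M) :
    Fintype.card V ≡ (unmatched M).card [MOD 2] := by
  let f : Function.End V := fun v => (M v).getD v
  have hf : f ^ 2 ^ 1 = 1 := by
    funext v
    show (M ((M v).getD v)).getD ((M v).getD v) = v
    rcases hv : M v with _ | u
    · simp [hv]
    · simp [hM.symm v u hv]
  have hfix : Fintype.card (Function.fixedPoints f) = (unmatched M).card := by
    refine Fintype.card_of_subtype _ fun v => ?_
    show v ∈ unmatched M ↔ (M v).getD v = v
    rcases hv : M v with _ | u
    · simp [hv]
    · simpa [hv] using fun h : u = v => hM.ne_self v (h ▸ hv)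
  have : Fact (Nat.Prime 2) := ⟨Nat.prime_two⟩
  exact hfix ▸ Equiv.Perm.card_fixedPoints_modEq hf

theorem IsMatching.even_card_unmatched (hM : P.IsMatching M) (hV : Even (Fintype.card V)) :
    Even (unmatched M).card := by
  have := hM.card_unmatched_modEq
  rw [Nat.ModEq, Nat.even_iff.mp hV] at this
  exact Nat.even_iff.mpr this.symm

theorem Blocks.symm (hM : P.IsMatching M) {x y : V} (h : P.Blocks M x y) : P.Blocks M y x :=
  ⟨⟨h.1.2, h.1.1⟩, fun hyx => h.2.1 (hM.symm y x hyx), h.2.2.2, h.2.2.1⟩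

theorem not_blocks_of_indifferent (hM : P.IsMatching M) {x y : V} (hy : M y ≠ none)
    (hind : P.Indifferent y) : ¬ P.Blocks M x y := by
  intro hb
  obtain ⟨z, hz⟩ := Option.ne_none_iff_exists'.mp hy
  exact (hb.2.2.2 z hz).2 (hind z (hM.mutacc y z hz).1 x hb.1.2)

theorem rank_eq_zero_of_indifferent {i y : V} (hind : P.Indifferent i) (hy : y ∈ P.acc i) :
    P.rank i y = 0 := by
  have : {z : V | z ∈ P.acc i ∧ P.SPref i z y} = ∅ :=
    Set.eq_empty_of_forall_notMem fun z hz => hz.2.2 (hind y hy z hz.1)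
  simp [rank, this]

theorem agentCost_le_egalCost (P : Profile V) (M : V → Option V) (i : V) :
    P.agentCost M i ≤ P.egalCost M :=
  Finset.single_le_sum (fun _ _ => Nat.zero_le _) (Finset.mem_univ i)

theorem card_acc_le_egalCost_of_unmatched {v : V} (hv : M v = none) :
    (P.acc v).card ≤ P.egalCost M := by
  simpa [agentCost, hv] using P.agentCost_le_egalCost M v

theorem card_unmatched_le_egalCost (hne : ∀ i, (P.acc i).Nonempty) :
    (unmatched M).card ≤ P.egalCost M := by
  have hpos : ∀ v ∈ unmatched M, 1 ≤ P.agentCost M v := fun v hv => by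
    simpa [agentCost, mem_unmatched.mp hv, Nat.one_le_iff_ne_zero] using (hne v).ne_empty
  calc (unmatched M).card = ∑ _v ∈ unmatched M, 1 := Finset.card_eq_sum_ones _
    _ ≤ ∑ v ∈ unmatched M, P.agentCost M v := Finset.sum_le_sum hpos
    _ ≤ P.egalCost M := Finset.sum_le_sum_of_subset (Finset.subset_univ _)

end Profile

end Matchings

def finPairSwap {k : ℕ} (hk : Even k) (a : Fin k) : Fin k :=
  ⟨if (a : ℕ) % 2 = 0 then (a : ℕ) + 1 else (a : ℕ) - 1, by
    have := Nat.even_iff.mp hk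
    have := a.isLt
    split_ifs <;> omega⟩

theorem finPairSwap_val {k : ℕ} (hk : Even k) (a : Fin k) :
    (finPairSwap hk a : ℕ) = if (a : ℕ) % 2 = 0 then (a : ℕ) + 1 else (a : ℕ) - 1 := rfl

@[simp]
theorem finPairSwap_finPairSwap {k : ℕ} (hk : Even k) (a : Fin k) :
    finPairSwap hk (finPairSwap hk a) = a := by
  ext
  simp only [finPairSwap_val]
  split_ifs <;> omega

theorem finPairSwap_ne {k : ℕ} (hk : Even k) (a : Fin k) : finPairSwap hk a ≠ a := by
  intro h
  have := congrArg Fin.val h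
  rw [finPairSwap_val] at this
  split_ifs at this <;> omega

theorem finPairSwap_lt_iff {k s : ℕ} (hk : Even k) (hs : Even s) (a : Fin k) :
    (finPairSwap hk a : ℕ) < s ↔ (a : ℕ) < s := by
  have := Nat.even_iff.mp hs
  rw [finPairSwap_val]
  split_ifs <;> omega

section Padding

variable {V β : Type*}

def restrictInl (M' : V ⊕ β → Option (V ⊕ β)) (v : V) : Option V :=
  (M' (inl v)).bind getLeft?

@[simp]
theorem restrictInl_eq_some_iff {M' : V ⊕ β → Option (V ⊕ β)} {v u : V} :
    restrictInl M' v = some u ↔ M' (inl v) = some (inl u) := by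
  simp [restrictInl, Option.bind_eq_some_iff]

variable [Fintype V] {k : ℕ}

/-- The new agents `s, …, k - 1` left over after matching the `s` unmatched agents of `M` are
paired among themselves by `finPairSwap`, which maps them to each other because `s` is even. -/
noncomputable def padMatching (M : V → Option V) (hk : Even k) (hs : (unmatched M).card ≤ k) :
    V ⊕ Fin k → Option (V ⊕ Fin k)
  | inl v =>
    if hv : M v = none then
      some (inr (Fin.castLE hs ((unmatched M).equivFin ⟨v, mem_unmatched.mpr hv⟩)))
    else (M v).map inl
  | inr a =>
    if ha : (a : ℕ) < (unmatched M).card then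
      some (inl ((unmatched M).equivFin.symm ⟨a, ha⟩))
    else some (inr (finPairSwap hk a))

section

variable {M : V → Option V} {hk : Even k} {hs : (unmatched M).card ≤ k}

theorem padMatching_inl_of_eq_some {v u : V} (hvu : M v = some u) :
    padMatching M hk hs (inl v) = some (inl u) := by
  simp [padMatching, hvu]

theorem padMatching_inl_inl_iff {v u : V} :
    padMatching M hk hs (inl v) = some (inl u) ↔ M v = some u := by
  refine ⟨fun h => ?_, padMatching_inl_of_eq_some⟩
  rcases hw : M v with _ | w
  · simp [padMatching, hw] at h
  · rw [padMatching_inl_of_eq_some hw] at h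
    simpa using h

theorem padMatching_inl_of_eq_none {v : V} (hv : M v = none) :
    ∃ a, padMatching M hk hs (inl v) = some (inr a) := by
  simp [padMatching, hv]

theorem padMatching_inr (a : Fin k) :
    padMatching M hk hs (inr a) =
      if ha : (a : ℕ) < (unmatched M).card then
        some (inl ((unmatched M).equivFin.symm ⟨a, ha⟩ : V))
      else some (inr (finPairSwap hk a)) := rfl

theorem padMatching_ne_none (w : V ⊕ Fin k) : padMatching M hk hs w ≠ none := by
  rcases w with v | a
  · rcases hv : M v with _ | u
    · obtain ⟨a, ha⟩ := padMatching_inl_of_eq_none (hk := hk) (hs := hs) hv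
      simp [ha]
    · simp [padMatching_inl_of_eq_some hv]
  · rw [padMatching_inr]
    split_ifs <;> simp

theorem padMatching_symm (hM : ∀ x y, M x = some y → M y = some x)
    (hS : Even (unmatched M).card) (x y : V ⊕ Fin k) :
    padMatching M hk hs x = some y → padMatching M hk hs y = some x := by
  rcases x with v | a
  · rcases hv : M v with _ | u
    · simp only [padMatching, hv, dite_true, Option.some.injEq]
      rintro rfl
      simp
    · rw [padMatching_inl_of_eq_some hv, Option.some.injEq]
      rintro rfl
      exact padMatching_inl_of_eq_some (hM v u hv)
  · rw [padMatching_inr]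
    split_ifs with ha
    · rw [Option.some.injEq]
      rintro rfl
      have hw := mem_unmatched.mp ((unmatched M).equivFin.symm ⟨a, ha⟩).2
      simp only [padMatching, hw, dite_true, Subtype.coe_eta, Equiv.apply_symm_apply]
      rfl
    · rw [Option.some.injEq]
      rintro rfl
      rw [padMatching_inr, dif_neg (by rwa [finPairSwap_lt_iff hk hS]), finPairSwap_finPairSwap]

end

namespace Profile

variable [DecidableEq V] [DecidableEq β] [Fintype β]

structure IsPadding (P : Profile V) (Vstar : Finset V) (P' : Profile (V ⊕ β)) : Prop where
  acc_inl_of_notMem : ∀ v, v ∉ Vstar → P'.acc (inl v) = (P.acc v).image inl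
  pref_inl_iff : ∀ v, ∀ x ∈ P.acc v, ∀ y ∈ P.acc v,
    (P'.pref (inl v) (inl x) (inl y) ↔ P.pref v x y)
  acc_inr : ∀ a, P'.acc (inr a) = (univ.erase a).image inr ∪ Vstar.image inl
  indifferent_inr : ∀ a, P'.Indifferent (inr a)
  acc_inl_of_mem : ∀ b ∈ Vstar, P'.acc (inl b) = (P.acc b).image inl ∪ univ.image inr
  pref_inl_inr_inr : ∀ b ∈ Vstar, ∀ a a', P'.pref (inl b) (inr a) (inr a')
  sPref_inl_inl_inr : ∀ b ∈ Vstar, ∀ x ∈ P.acc b, ∀ a, P'.SPref (inl b) (inl x) (inr a)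

namespace IsPadding

section

variable {P : Profile V} {Vstar : Finset V} {P' : Profile (V ⊕ β)}

theorem inl_mem_acc_inl_iff (h : P.IsPadding Vstar P') {v x : V} :
    inl x ∈ P'.acc (inl v) ↔ x ∈ P.acc v := by
  by_cases hv : v ∈ Vstar
  · simp [h.acc_inl_of_mem v hv]
  · simp [h.acc_inl_of_notMem v hv]

theorem mem_of_inr_mem_acc_inl (h : P.IsPadding Vstar P') {v : V} {a : β}
    (ha : inr a ∈ P'.acc (inl v)) : v ∈ Vstar := by
  by_contra hv
  simp [h.acc_inl_of_notMem v hv] at ha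

theorem inr_mem_acc_inl (h : P.IsPadding Vstar P') {v : V} (hv : v ∈ Vstar) (a : β) :
    inr a ∈ P'.acc (inl v) := by
  simp [h.acc_inl_of_mem v hv]

theorem inl_mem_acc_inr (h : P.IsPadding Vstar P') {v : V} (hv : v ∈ Vstar) (a : β) :
    inl v ∈ P'.acc (inr a) := by
  simp [h.acc_inr a, hv]

theorem inr_mem_acc_inr (h : P.IsPadding Vstar P') {a b : β} (hab : b ≠ a) :
    inr b ∈ P'.acc (inr a) := by
  simp [h.acc_inr a, hab]

theorem mutAcc_inl_iff (h : P.IsPadding Vstar P') {x y : V} :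
    P'.MutAcc (inl x) (inl y) ↔ P.MutAcc x y := by
  simp only [MutAcc, h.inl_mem_acc_inl_iff]

theorem sPref_inl_iff (h : P.IsPadding Vstar P') {v x y : V} (hx : x ∈ P.acc v)
    (hy : y ∈ P.acc v) : P'.SPref (inl v) (inl x) (inl y) ↔ P.SPref v x y := by
  simp only [SPref, h.pref_inl_iff v x hx y hy, h.pref_inl_iff v y hy x hx]

theorem rank_inl_inl (h : P.IsPadding Vstar P') {v u : V} (hu : u ∈ P.acc v) :
    P'.rank (inl v) (inl u) = P.rank v u := by
  have : {z | z ∈ P'.acc (inl v) ∧ P'.SPref (inl v) z (inl u)} =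
      inl '' {z | z ∈ P.acc v ∧ P.SPref v z u} := by
    ext (z | a)
    · simp only [Set.mem_ofPred_eq, Set.mem_image, inl.injEq, exists_eq_right]
      exact ⟨fun ⟨hz, hzu⟩ => ⟨h.inl_mem_acc_inl_iff.mp hz,
          (h.sPref_inl_iff (h.inl_mem_acc_inl_iff.mp hz) hu).mp hzu⟩,
        fun ⟨hz, hzu⟩ => ⟨h.inl_mem_acc_inl_iff.mpr hz, (h.sPref_inl_iff hz hu).mpr hzu⟩⟩
    · simp only [Set.mem_ofPred_eq, Set.mem_image, reduceCtorEq, and_false, exists_false,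
        iff_false, not_and]
      exact fun ha hau => (h.sPref_inl_inl_inr v (h.mem_of_inr_mem_acc_inl ha) u hu a).2 hau.1
  rw [rank, rank, this, Set.ncard_image_of_injective _ inl_injective]

theorem rank_inl_inr (h : P.IsPadding Vstar P') {v : V} (hv : v ∈ Vstar) (a : β) :
    P'.rank (inl v) (inr a) = (P.acc v).card := by
  have : {z | z ∈ P'.acc (inl v) ∧ P'.SPref (inl v) z (inr a)} = inl '' (P.acc v : Set V) := by
    ext (x | b)
    · simp only [Set.mem_ofPred_eq, Set.mem_image, Finset.mem_coe, inl.injEq, exists_eq_right]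
      exact ⟨fun hx => h.inl_mem_acc_inl_iff.mp hx.1,
        fun hx => ⟨h.inl_mem_acc_inl_iff.mpr hx, h.sPref_inl_inl_inr v hv x hx a⟩⟩
    · simp only [Set.mem_ofPred_eq, Set.mem_image, reduceCtorEq, and_false, exists_false,
        iff_false, not_and]
      exact fun _ hba => hba.2 (h.pref_inl_inr_inr v hv a b)
  rw [rank, this, Set.ncard_image_of_injective _ inl_injective, Set.ncard_coe_finset]

theorem rank_inr (h : P.IsPadding Vstar P') {a : β} {w : V ⊕ β} (hw : w ∈ P'.acc (inr a)) :
    P'.rank (inr a) w = 0 :=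
  rank_eq_zero_of_indifferent (h.indifferent_inr a) hw

variable {M' : V ⊕ β → Option (V ⊕ β)}

theorem isMatching_restrictInl (h : P.IsPadding Vstar P') (hM' : P'.IsMatching M') :
    P.IsMatching (restrictInl M') where
  symm x y hxy := by
    rw [restrictInl_eq_some_iff] at hxy ⊢
    exact hM'.symm _ _ hxy
  mutacc x y hxy := h.mutAcc_inl_iff.mp (hM'.mutacc _ _ (restrictInl_eq_some_iff.mp hxy))

/-- A blocking pair of the restriction also blocks `M'`: an agent of `Vstar` matched to a new
agent prefers every one of its original acceptable agents. -/
theorem stable_restrictInl (h : P.IsPadding Vstar P') (hM' : P'.IsMatching M')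
    (hst : P'.Stable M') : P.Stable (restrictInl M') := by
  have hprefers : ∀ x y, y ∈ P.acc x → (∀ z, restrictInl M' x = some z → P.SPref x y z) →
      ∀ z', M' (inl x) = some z' → P'.SPref (inl x) (inl y) z' := by
    rintro x y hy hx (z | a) hz
    · have hz' := restrictInl_eq_some_iff.mpr hz
      exact (h.sPref_inl_iff hy (h.isMatching_restrictInl hM' |>.mutacc x z hz').1).mpr
        (hx z hz')
    · exact h.sPref_inl_inl_inr x (h.mem_of_inr_mem_acc_inl (hM'.mutacc _ _ hz).1) y hy a
  rintro x y ⟨hxy, hne, hx, hy⟩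
  exact hst (inl x) (inl y) ⟨h.mutAcc_inl_iff.mpr hxy,
    fun h' => hne (restrictInl_eq_some_iff.mpr h'), hprefers x y hxy.1 hx, hprefers y x hxy.2 hy⟩

theorem agentCost_restrictInl (h : P.IsPadding Vstar P') (hM' : P'.IsMatching M') {v : V}
    (hv : M' (inl v) ≠ none) : P.agentCost (restrictInl M') v = P'.agentCost M' (inl v) := by
  rcases hw : M' (inl v) with _ | (u | a)
  · exact absurd hw hv
  · have hu := restrictInl_eq_some_iff.mpr hw
    simp only [agentCost, hu, hw]
    exact (h.rank_inl_inl (h.mutAcc_inl_iff.mp (hM'.mutacc _ _ hw)).1).symm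
  · have hnone : restrictInl M' v = none := by simp [restrictInl, hw]
    simp only [agentCost, hnone, hw]
    exact (h.rank_inl_inr (h.mem_of_inr_mem_acc_inl (hM'.mutacc _ _ hw).1) a).symm

theorem egalCost_restrictInl_le (h : P.IsPadding Vstar P') (hM' : P'.IsMatching M')
    (hperf : ∀ w, M' w ≠ none) : P.egalCost (restrictInl M') ≤ P'.egalCost M' := by
  rw [egalCost, egalCost, Fintype.sum_sum_type]
  simp only [h.agentCost_restrictInl hM' (hperf _)]
  exact Nat.le_add_right _ _

end

variable {P : Profile V} {Vstar : Finset V} {P' : Profile (V ⊕ Fin k)} {M : V → Option V}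
  {hk : Even k} {hs : (unmatched M).card ≤ k}

theorem isMatching_padMatching (h : P.IsPadding Vstar P') (hM : P.IsMatching M)
    (hS : Even (unmatched M).card) (hstar : unmatched M ⊆ Vstar) :
    P'.IsMatching (padMatching M hk hs) := by
  have hmut : ∀ w a, padMatching M hk hs w = some (inr a) → P'.MutAcc w (inr a) := by
    rintro (v | b) a hw
    · have hv : M v = none := by
        by_contra hv
        obtain ⟨u, hu⟩ := Option.ne_none_iff_exists'.mp hv
        simp [padMatching_inl_of_eq_some hu] at hw
      have hv := hstar (mem_unmatched.mpr hv)
      exact ⟨h.inr_mem_acc_inl hv a, h.inl_mem_acc_inr hv a⟩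
    · have hba : b ≠ a := by
        rintro rfl
        rw [padMatching_inr] at hw
        split_ifs at hw
        · simp at hw
        · exact finPairSwap_ne hk b (by simpa using hw)
      exact ⟨h.inr_mem_acc_inr (Ne.symm hba), h.inr_mem_acc_inr hba⟩
  refine ⟨padMatching_symm hM.symm hS, ?_⟩
  rintro x (u | a) hxy
  · rcases x with v | b
    · exact h.mutAcc_inl_iff.mpr (hM.mutacc v u (padMatching_inl_inl_iff.mp hxy))
    · have := hmut _ _ (padMatching_symm hM.symm hS _ _ hxy)
      exact ⟨this.2, this.1⟩
  · exact hmut x a hxy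

theorem stable_padMatching (h : P.IsPadding Vstar P') (hM : P.IsMatching M) (hst : P.Stable M)
    (hS : Even (unmatched M).card) (hstar : unmatched M ⊆ Vstar) :
    P'.Stable (padMatching M hk hs) := by
  have hM' := h.isMatching_padMatching (hk := hk) (hs := hs) hM hS hstar
  have hprefers : ∀ x y, y ∈ P.acc x →
      (∀ z', padMatching M hk hs (inl x) = some z' → P'.SPref (inl x) (inl y) z') →
      ∀ z, M x = some z → P.SPref x y z := fun x y hy hx z hz =>
    (h.sPref_inl_iff hy (hM.mutacc x z hz).1).mp (hx _ (padMatching_inl_of_eq_some hz))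
  rintro x (w | a) hb
  · rcases x with v | a
    · obtain ⟨hvw, hne, hv, hw⟩ := hb
      have hvw := h.mutAcc_inl_iff.mp hvw
      exact hst v w ⟨hvw, fun h' => hne (padMatching_inl_of_eq_some h'),
        hprefers v w hvw.1 hv, hprefers w v hvw.2 hw⟩
    · exact not_blocks_of_indifferent hM' (padMatching_ne_none _) (h.indifferent_inr a)
        (hb.symm hM')
  · exact not_blocks_of_indifferent hM' (padMatching_ne_none _) (h.indifferent_inr a) hb

theorem egalCost_padMatching (h : P.IsPadding Vstar P') (hM : P.IsMatching M)
    (hS : Even (unmatched M).card) (hstar : unmatched M ⊆ Vstar) :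
    P'.egalCost (padMatching M hk hs) = P.egalCost M := by
  have hM' := h.isMatching_padMatching (hk := hk) (hs := hs) hM hS hstar
  have hinl : ∀ v, P'.agentCost (padMatching M hk hs) (inl v) = P.agentCost M v := by
    intro v
    rcases hv : M v with _ | u
    · obtain ⟨a, ha⟩ := padMatching_inl_of_eq_none (hk := hk) (hs := hs) hv
      simp only [agentCost, ha, hv]
      exact h.rank_inl_inr (hstar (mem_unmatched.mpr hv)) a
    · have hu := padMatching_inl_of_eq_some (hk := hk) (hs := hs) hv
      simp only [agentCost, hu, hv]
      exact h.rank_inl_inl (hM.mutacc v u hv).1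
  have hinr : ∀ a, P'.agentCost (padMatching M hk hs) (inr a) = 0 := by
    intro a
    obtain ⟨w, hw⟩ :=
      Option.ne_none_iff_exists'.mp (padMatching_ne_none (hk := hk) (hs := hs) (inr a))
    simp only [agentCost, hw]
    exact h.rank_inr (hM'.mutacc _ _ hw).1
  simp [egalCost, Fintype.sum_sum_type, hinl, hinr]

end IsPadding

end Profile

end Padding

end StableRoommates

theorem stmt_16 {V : Type*} [DecidableEq V] [Fintype V] (P : Profile V)
    (hne : ∀ i : V, P.acc i ≠ ∅) (heven : Even (Fintype.card V))
    (γ k : ℕ) (hk : k = if Even γ then γ else γ - 1)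
    (Vstar : Finset V) (hVstar : Vstar = Finset.univ.filter (fun b : V => (P.acc b).card ≤ γ))
    (P' : Profile (V ⊕ Fin k))
    (hacc_old : ∀ v : V, v ∉ Vstar → P'.acc (Sum.inl v) = (P.acc v).image Sum.inl)
    (hpref_old : ∀ v : V, ∀ x ∈ P.acc v, ∀ y ∈ P.acc v,
      (P'.pref (Sum.inl v) (Sum.inl x) (Sum.inl y) ↔ P.pref v x y))
    (hacc_new : ∀ a : Fin k, P'.acc (Sum.inr a) =
      (Finset.univ.erase a).image Sum.inr ∪ Vstar.image Sum.inl)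
    (htie_new : ∀ a : Fin k, ∀ x ∈ P'.acc (Sum.inr a), ∀ y ∈ P'.acc (Sum.inr a),
      P'.pref (Sum.inr a) x y)
    (hacc_star : ∀ b ∈ Vstar, P'.acc (Sum.inl b) =
      (P.acc b).image Sum.inl ∪ Finset.univ.image (Sum.inr : Fin k → V ⊕ Fin k))
    (htie_star : ∀ b ∈ Vstar, ∀ a a' : Fin k,
      P'.pref (Sum.inl b) (Sum.inr a) (Sum.inr a'))
    (hstrict_star : ∀ b ∈ Vstar, ∀ x ∈ P.acc b, ∀ a : Fin k,
      P'.SPref (Sum.inl b) (Sum.inl x) (Sum.inr a)) :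
    (∃ M, P.IsMatching M ∧ P.Stable M ∧ P.egalCost M ≤ γ) ↔
    (∃ M', P'.IsMatching M' ∧ P'.Stable M' ∧ (∀ w, M' w ≠ none) ∧
      P'.egalCost M' ≤ γ) := by
  have hP' : P.IsPadding Vstar P' :=
    ⟨hacc_old, hpref_old, hacc_new, htie_new, hacc_star, htie_star, hstrict_star⟩
  constructor
  · rintro ⟨M, hM, hst, hcost⟩
    have hS : Even (unmatched M).card := hM.even_card_unmatched heven
    have hstar : unmatched M ⊆ Vstar := fun v hv => by
      rw [hVstar, Finset.mem_filter]
      exact ⟨Finset.mem_univ v,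
        (card_acc_le_egalCost_of_unmatched (mem_unmatched.mp hv)).trans hcost⟩
    have hSγ : (unmatched M).card ≤ γ :=
      (card_unmatched_le_egalCost fun i => Finset.nonempty_iff_ne_empty.mpr (hne i)).trans hcost
    obtain ⟨hk2, hSk⟩ : Even k ∧ (unmatched M).card ≤ k := by
      rw [Nat.even_iff] at hS ⊢
      split_ifs at hk with hγ <;> rw [Nat.even_iff] at hγ <;> omega
    exact ⟨padMatching M hk2 hSk, hP'.isMatching_padMatching hM hS hstar,
      hP'.stable_padMatching hM hst hS hstar, padMatching_ne_none,
      (hP'.egalCost_padMatching hM hS hstar).trans_le hcost⟩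
  · rintro ⟨M', hM', hst', hperf, hcost'⟩
    exact ⟨restrictInl M', hP'.isMatching_restrictInl hM', hP'.stable_restrictInl hM' hst',
      (hP'.egalCost_restrictInl_le hM' hperf).trans hcost'⟩
end

section
/- Let G = (U, E) be a finite simple graph with |U| = n ≥ 1 vertices, let k be an integer with 1 ≤ k < n, and let c ≥ 1 be an integer. Construct the preference profile P on agents U ∪ A ∪ D, where A = {a_1,…,a_{n−k}} and D = {d^u_{1,i}, d^u_{2,i} : u ∈ U, 1 ≤ i ≤ c} are new agents, as follows: each a_j has acceptable set exactly U, with all agents of U tied (rank 0); each u ∈ U has acceptable set A ∪ {d^u_{1,i} : 1 ≤ i ≤ c} ∪ N_G(u), where all agents of A are tied at the top, below them d^u_{1,1} ≻ d^u_{1,2} ≻ … ≻ d^u_{1,c}, and below these all neighbors in N_G(u), tied with each other; each d^u_{1,i} has acceptable agents exactly d^u_{2,i} and u with d^u_{2,i} ≻ u; each d^u_{2,i} has d^u_{1,i} as its only acceptable agent. Define the modified egalitarian cost of a matching M as Σ over matched agents i of rank_i(M(i)) plus c times the number of unmatched agents. Then G has an independent set of size k if and only if P admits a stable matching of modified egalitarian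 cost at most c·k. -/
open StableRoommates Profile

/-- The modified egalitarian cost: each matched agent contributes the rank of its
partner, each unmatched agent contributes `c`. -/
noncomputable def modCost {V : Type*} [DecidableEq V] [Fintype V] (P : Profile V)
    (M : V → Option V) (c : ℕ) : ℕ :=
  ∑ i, match M i with
    | none => c
    | some y => P.rank i y

theorem stmt_17 {U : Type*} [DecidableEq U] [Fintype U]
    (G : SimpleGraph U) [DecidableRel G.Adj]
    (n k c : ℕ) (hn : Fintype.card U = n) (hn1 : 1 ≤ n)
    (hk1 : 1 ≤ k) (hkn : k < n) (hc : 1 ≤ c)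
    (P : Profile (U ⊕ (Fin (n - k) ⊕ U × Fin c × Fin 2)))
    (hacc_a : ∀ j : Fin (n - k), P.acc (Sum.inr (Sum.inl j)) =
      Finset.univ.image (Sum.inl : U → U ⊕ (Fin (n - k) ⊕ U × Fin c × Fin 2)))
    (htie_a : ∀ j : Fin (n - k), ∀ u v : U,
      P.pref (Sum.inr (Sum.inl j)) (Sum.inl u) (Sum.inl v))
    (hacc_u : ∀ u : U, P.acc (Sum.inl u) =
      Finset.univ.image (fun j : Fin (n - k) => Sum.inr (Sum.inl j)) ∪
      Finset.univ.image (fun i : Fin c => Sum.inr (Sum.inr (u, i, 0))) ∪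
      (G.neighborFinset u).image Sum.inl)
    (htie_uA : ∀ u : U, ∀ j j' : Fin (n - k),
      P.pref (Sum.inl u) (Sum.inr (Sum.inl j)) (Sum.inr (Sum.inl j')))
    (hstrict_uAd : ∀ u : U, ∀ j : Fin (n - k), ∀ i : Fin c,
      P.SPref (Sum.inl u) (Sum.inr (Sum.inl j)) (Sum.inr (Sum.inr (u, i, 0))))
    (hchain_u : ∀ u : U, ∀ i i' : Fin c, i < i' →
      P.SPref (Sum.inl u) (Sum.inr (Sum.inr (u, i, 0))) (Sum.inr (Sum.inr (u, i', 0))))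
    (hstrict_udN : ∀ u : U, ∀ i : Fin c, ∀ v ∈ G.neighborFinset u,
      P.SPref (Sum.inl u) (Sum.inr (Sum.inr (u, i, 0))) (Sum.inl v))
    (htie_uN : ∀ u : U, ∀ v ∈ G.neighborFinset u, ∀ w ∈ G.neighborFinset u,
      P.pref (Sum.inl u) (Sum.inl v) (Sum.inl w))
    (hacc_d1 : ∀ u : U, ∀ i : Fin c, P.acc (Sum.inr (Sum.inr (u, i, 0))) =
      {Sum.inr (Sum.inr (u, i, 1)), Sum.inl u})
    (hpref_d1 : ∀ u : U, ∀ i : Fin c,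
      P.SPref (Sum.inr (Sum.inr (u, i, 0))) (Sum.inr (Sum.inr (u, i, 1))) (Sum.inl u))
    (hacc_d2 : ∀ u : U, ∀ i : Fin c, P.acc (Sum.inr (Sum.inr (u, i, 1))) =
      {Sum.inr (Sum.inr (u, i, 0))}) :
    (∃ S : Finset U, S.card = k ∧ ∀ u ∈ S, ∀ v ∈ S, ¬ G.Adj u v) ↔
    (∃ M, P.IsMatching M ∧ P.Stable M ∧ modCost P M c ≤ c * k) := by
  classical
  have hStrans : ∀ x y z w, P.SPref x y z → P.SPref x z w → P.SPref x y w := by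
    rintro x y z w ⟨h1, h2⟩ ⟨h3, h4⟩
    exact ⟨P.pref_trans _ _ _ _ h1 h3, fun h => h2 (P.pref_trans _ _ _ _ h3 h)⟩
  have hnk : 0 < n - k := by omega
  set i0 : Fin c := ⟨0, hc⟩ with hi0
  set j0 : Fin (n - k) := ⟨0, hnk⟩ with hj0
  have hA_mem : ∀ (u : U) (j : Fin (n - k)),
      (Sum.inr (Sum.inl j) : U ⊕ (Fin (n - k) ⊕ U × Fin c × Fin 2)) ∈ P.acc (Sum.inl u) := by
    intro u j; rw [hacc_u]; simp
  have hD_mem : ∀ (u : U) (i : Fin c),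
      (Sum.inr (Sum.inr (u, i, 0)) : U ⊕ (Fin (n - k) ⊕ U × Fin c × Fin 2)) ∈ P.acc (Sum.inl u) := by
    intro u i; rw [hacc_u]; simp
  have hN_mem : ∀ (u v : U), v ∈ G.neighborFinset u →
      (Sum.inl v : U ⊕ (Fin (n - k) ⊕ U × Fin c × Fin 2)) ∈ P.acc (Sum.inl u) := by
    intro u v hv; rw [hacc_u]; simp only [Finset.mem_union, Finset.mem_image]
    exact Or.inr ⟨v, hv, rfl⟩
  have hu_mem_a : ∀ (j : Fin (n - k)) (u : U),
      (Sum.inl u : U ⊕ (Fin (n - k) ⊕ U × Fin c × Fin 2)) ∈ P.acc (Sum.inr (Sum.inl j)) := by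
    intro j u; rw [hacc_a]; simp
  have hacc_u_cases : ∀ (u : U) z, z ∈ P.acc (Sum.inl u) →
      (∃ j : Fin (n - k), z = Sum.inr (Sum.inl j)) ∨
      (∃ i : Fin c, z = Sum.inr (Sum.inr (u, i, 0))) ∨
      (∃ v, v ∈ G.neighborFinset u ∧ z = Sum.inl v) := by
    intro u z hz
    rw [hacc_u] at hz
    simp only [Finset.mem_union, Finset.mem_image, Finset.mem_univ, true_and] at hz
    rcases hz with (⟨j, hj⟩ | ⟨i, hi⟩) | ⟨v, hv, hv'⟩
    · exact Or.inl ⟨j, hj.symm⟩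
    · exact Or.inr (Or.inl ⟨i, hi.symm⟩)
    · exact Or.inr (Or.inr ⟨v, hv, hv'.symm⟩)
  have hA_top : ∀ (u : U) (j : Fin (n - k)) z, z ∈ P.acc (Sum.inl u) →
      P.pref (Sum.inl u) (Sum.inr (Sum.inl j)) z := by
    intro u j z hz
    rcases hacc_u_cases u z hz with ⟨j', rfl⟩ | ⟨i, rfl⟩ | ⟨v, hv, rfl⟩
    · exact htie_uA u j j'
    · exact (hstrict_uAd u j i).1
    · exact P.pref_trans _ _ _ _ (hstrict_uAd u j i0).1 (hstrict_udN u i0 v hv).1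
  have hrank_zero : ∀ (x y : U ⊕ (Fin (n - k) ⊕ U × Fin c × Fin 2)),
      (∀ z ∈ P.acc x, ¬ P.SPref x z y) → P.rank x y = 0 := by
    intro x y h
    have he : {z | z ∈ P.acc x ∧ P.SPref x z y} = ∅ := by
      ext z; simp only [Set.mem_setOf_eq, Set.mem_empty_iff_false, iff_false, not_and]
      exact h z
    rw [Profile.rank, he, Set.ncard_empty]
  have hrank_a : ∀ (u : U) (j : Fin (n - k)), P.rank (Sum.inl u) (Sum.inr (Sum.inl j)) = 0 := by
    intro u j; apply hrank_zero; intro z hz hs; exact hs.2 (hA_top u j z hz)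
  have hrank_au : ∀ (j : Fin (n - k)) (u : U), P.rank (Sum.inr (Sum.inl j)) (Sum.inl u) = 0 := by
    intro j u; apply hrank_zero; intro z hz hs
    rw [hacc_a] at hz
    simp only [Finset.mem_image, Finset.mem_univ, true_and] at hz
    obtain ⟨v, rfl⟩ := hz
    exact hs.2 (htie_a j u v)
  have hrank_d1 : ∀ (u : U) (i : Fin c),
      P.rank (Sum.inr (Sum.inr (u, i, 0))) (Sum.inr (Sum.inr (u, i, 1))) = 0 := by
    intro u i; apply hrank_zero; intro z hz hs
    rw [hacc_d1] at hz
    rcases Finset.mem_insert.1 hz with rfl | hz'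
    · exact hs.2 hs.1
    · rcases Finset.mem_singleton.1 hz' with rfl
      exact (hpref_d1 u i).2 hs.1
  have hrank_d2 : ∀ (u : U) (i : Fin c),
      P.rank (Sum.inr (Sum.inr (u, i, 1))) (Sum.inr (Sum.inr (u, i, 0))) = 0 := by
    intro u i; apply hrank_zero; intro z hz hs
    rw [hacc_d2] at hz
    rcases Finset.mem_singleton.1 hz with rfl
    exact hs.2 hs.1
  have hrank_nb : ∀ (u v : U), v ∈ G.neighborFinset u →
      c + 1 ≤ P.rank (Sum.inl u) (Sum.inl v) := by
    intro u v hv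
    set F : Finset (U ⊕ (Fin (n - k) ⊕ U × Fin c × Fin 2)) :=
      insert (Sum.inr (Sum.inl j0))
        (Finset.univ.image fun i : Fin c => Sum.inr (Sum.inr (u, i, 0))) with hF
    have hsub : (F : Set (U ⊕ (Fin (n - k) ⊕ U × Fin c × Fin 2))) ⊆
        {z | z ∈ P.acc (Sum.inl u) ∧ P.SPref (Sum.inl u) z (Sum.inl v)} := by
      intro z hz
      simp only [hF, Finset.coe_insert, Set.mem_insert_iff, Finset.coe_image,
        Set.mem_image, Finset.mem_coe, Finset.mem_univ, true_and, Finset.coe_univ,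
        Set.image_univ, Set.mem_range] at hz
      rcases hz with rfl | ⟨i, rfl⟩
      · exact ⟨hA_mem u j0, hStrans _ _ _ _ (hstrict_uAd u j0 i0) (hstrict_udN u i0 v hv)⟩
      · exact ⟨hD_mem u i, hstrict_udN u i v hv⟩
    have hcard : F.card = c + 1 := by
      rw [hF, Finset.card_insert_of_notMem (by simp),
        Finset.card_image_of_injective _ (fun a b h => by simpa using h),
        Finset.card_univ, Fintype.card_fin]
    calc c + 1 = F.card := hcard.symm
      _ = (F : Set (U ⊕ (Fin (n - k) ⊕ U × Fin c × Fin 2))).ncard :=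
          (Set.ncard_coe_finset _).symm
      _ ≤ _ := Set.ncard_le_ncard hsub (Set.toFinite _)
  have hb2' : ∀ b : Fin 2, b = 0 ∨ b = 1 := by decide
  constructor
  · rintro ⟨S, hScard, hSind⟩
    have hcompl : Sᶜ.card = n - k := by
      rw [Finset.card_compl, hScard, hn]
    set e : {x // x ∈ Sᶜ} ≃ Fin (n - k) := Sᶜ.equivFinOfCardEq hcompl with he
    set M : (U ⊕ (Fin (n - k) ⊕ U × Fin c × Fin 2)) →
        Option (U ⊕ (Fin (n - k) ⊕ U × Fin c × Fin 2)) :=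
      fun x => Sum.elim
        (fun u => if h : u ∈ Sᶜ then some (Sum.inr (Sum.inl (e ⟨u, h⟩))) else none)
        (Sum.elim
          (fun j => some (Sum.inl ((e.symm j) : U)))
          (fun p => if p.2.2 = 0 then some (Sum.inr (Sum.inr (p.1, p.2.1, 1)))
                    else some (Sum.inr (Sum.inr (p.1, p.2.1, 0))))) x
      with hMdef
    have hMu : ∀ (u : U) (h : u ∈ Sᶜ),
        M (Sum.inl u) = some (Sum.inr (Sum.inl (e ⟨u, h⟩))) := by
      intro u h; simp [hMdef, Finset.mem_compl.1 h]
    have hMuS : ∀ u ∈ S, M (Sum.inl u) = none := by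
      intro u h
      simp [hMdef, h]
    have hMa : ∀ j : Fin (n - k), M (Sum.inr (Sum.inl j)) = some (Sum.inl ((e.symm j) : U)) := by
      intro j; simp [hMdef]
    have hMd0 : ∀ (u : U) (i : Fin c),
        M (Sum.inr (Sum.inr (u, i, 0))) = some (Sum.inr (Sum.inr (u, i, 1))) := by
      intro u i; simp [hMdef]
    have hMd1 : ∀ (u : U) (i : Fin c),
        M (Sum.inr (Sum.inr (u, i, 1))) = some (Sum.inr (Sum.inr (u, i, 0))) := by
      intro u i; simp [hMdef]
    have hb2 : ∀ b : Fin 2, b = 0 ∨ b = 1 := by decide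
    refine ⟨M, ⟨?_, ?_⟩, ?_, ?_⟩
    · -- symm
      rintro (u | j | ⟨u, i, b⟩) y hxy
      · by_cases h : u ∈ S
        · rw [hMuS u h] at hxy
          exact absurd hxy (by simp)
        · have h' : u ∈ Sᶜ := Finset.mem_compl.2 h
          rw [hMu u h'] at hxy
          obtain rfl := Option.some_injective _ hxy
          rw [hMa]
          congr 2
          exact congrArg _ (e.symm_apply_apply ⟨u, h'⟩)
      · rw [hMa] at hxy
        obtain rfl := Option.some_injective _ hxy
        rw [hMu _ (Finset.coe_mem _)]
        congr 3
        rw [Subtype.coe_eta, e.apply_symm_apply]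
      · rcases hb2 b with rfl | rfl
        · rw [hMd0] at hxy
          obtain rfl := Option.some_injective _ hxy
          exact hMd1 u i
        · rw [hMd1] at hxy
          obtain rfl := Option.some_injective _ hxy
          exact hMd0 u i
    · -- mutacc
      rintro (u | j | ⟨u, i, b⟩) y hxy
      · by_cases h : u ∈ S
        · rw [hMuS u h] at hxy
          exact absurd hxy (by simp)
        · have h' : u ∈ Sᶜ := Finset.mem_compl.2 h
          rw [hMu u h'] at hxy
          obtain rfl := Option.some_injective _ hxy
          exact ⟨hA_mem u _, hu_mem_a _ u⟩
      · rw [hMa] at hxy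
        obtain rfl := Option.some_injective _ hxy
        exact ⟨hu_mem_a j _, hA_mem _ j⟩
      · rcases hb2 b with rfl | rfl
        · rw [hMd0] at hxy
          obtain rfl := Option.some_injective _ hxy
          refine ⟨by rw [hacc_d1]; simp, by rw [hacc_d2]; simp⟩
        · rw [hMd1] at hxy
          obtain rfl := Option.some_injective _ hxy
          refine ⟨by rw [hacc_d2]; simp, by rw [hacc_d1]; simp⟩
    · -- stable
      rintro x y ⟨hmut, hne, hx, hy⟩
      rcases x with (u | j | ⟨u, i, b⟩)
      · rcases hacc_u_cases u y hmut.1 with ⟨j, rfl⟩ | ⟨i, rfl⟩ | ⟨v, hv, rfl⟩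
        · exact (hy _ (hMa j)).2 (htie_a j _ u)
        · exact (hpref_d1 u i).2 (hy _ (hMd0 u i)).1
        · by_cases h : u ∈ Sᶜ
          · exact (hx _ (hMu u h)).2 (hA_top u _ _ hmut.1)
          · have hu : u ∈ S := by
              by_contra h'
              exact h (Finset.mem_compl.2 h')
            -- v side
            have huv : u ∈ G.neighborFinset v := by
              rcases hacc_u_cases v _ hmut.2 with ⟨j, hj⟩ | ⟨i, hi⟩ | ⟨w, hw, hww⟩
              · exact absurd hj (by simp)
              · exact absurd hi (by simp)
              · obtain rfl : w = u := by simpa using hww.symm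
                exact hw
            by_cases hvS : v ∈ S
            · exact hSind u hu v hvS (by simpa using hv)
            · have hv' : v ∈ Sᶜ := Finset.mem_compl.2 hvS
              exact (hy _ (hMu v hv')).2 (hA_top v _ _ hmut.2)
      · -- x = a_j
        have : ∃ u : U, y = Sum.inl u := by
          have := hmut.1
          rw [hacc_a] at this
          simp only [Finset.mem_image, Finset.mem_univ, true_and] at this
          obtain ⟨u, rfl⟩ := this
          exact ⟨u, rfl⟩
        obtain ⟨u, rfl⟩ := this
        exact (hx _ (hMa j)).2 (htie_a j _ u)
      · rcases hb2 b with rfl | rfl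
        · have := hmut.1
          rw [hacc_d1] at this
          rcases Finset.mem_insert.1 this with rfl | hz'
          · exact hne (hMd0 u i)
          · rcases Finset.mem_singleton.1 hz' with rfl
            exact (hpref_d1 u i).2 (hx _ (hMd0 u i)).1
        · have := hmut.1
          rw [hacc_d2] at this
          rcases Finset.mem_singleton.1 this with rfl
          exact hne (hMd1 u i)
    · -- cost
      have hval : modCost P M c =
          ∑ x : U ⊕ (Fin (n - k) ⊕ U × Fin c × Fin 2),
            Sum.elim (fun u : U => if u ∈ S then c else 0) (fun _ => 0) x := by
        rw [modCost]
        refine Finset.sum_congr rfl ?_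
        rintro (u | j | ⟨u, i, b⟩) _
        · by_cases h : u ∈ S
          · rw [hMuS u h]; simp [h]
          · rw [hMu u (Finset.mem_compl.2 h)]; simp [h, hrank_a]
        · rw [hMa j]; simp [hrank_au]
        · rcases hb2 b with rfl | rfl
          · rw [hMd0 u i]; simp [hrank_d1]
          · rw [hMd1 u i]; simp [hrank_d2]
      rw [hval, Fintype.sum_sum_type]
      simp only [Sum.elim_inl, Sum.elim_inr, Finset.sum_const_zero, add_zero]
      rw [Finset.sum_ite_mem, Finset.univ_inter, Finset.sum_const, hScard, smul_eq_mul,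
        mul_comm]
  · rintro ⟨M, hM, hstab, hcost⟩
    have hd1 : ∀ (u : U) (i : Fin c),
        M (Sum.inr (Sum.inr (u, i, 0))) = some (Sum.inr (Sum.inr (u, i, 1))) := by
      intro u i
      by_contra hne
      apply hstab (Sum.inr (Sum.inr (u, i, 0))) (Sum.inr (Sum.inr (u, i, 1)))
      refine ⟨⟨by rw [hacc_d1]; simp, by rw [hacc_d2]; simp⟩, hne, ?_, ?_⟩
      · intro z hz
        have hzacc := (hM.mutacc _ _ hz).1
        rw [hacc_d1] at hzacc
        rcases Finset.mem_insert.1 hzacc with rfl | hz'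
        · exact absurd hz hne
        · rcases Finset.mem_singleton.1 hz' with rfl
          exact hpref_d1 u i
      · intro z hz
        have hzacc := (hM.mutacc _ _ hz).1
        rw [hacc_d2] at hzacc
        rcases Finset.mem_singleton.1 hzacc with rfl
        exact absurd (hM.symm _ _ hz) hne
    have hupart : ∀ u : U, M (Sum.inl u) = none ∨
        (∃ j, M (Sum.inl u) = some (Sum.inr (Sum.inl j))) ∨
        (∃ v, v ∈ G.neighborFinset u ∧ M (Sum.inl u) = some (Sum.inl v)) := by
      intro u
      cases hMu : M (Sum.inl u) with
      | none => exact Or.inl rfl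
      | some z =>
        have hzacc := (hM.mutacc _ _ hMu).1
        rcases hacc_u_cases u z hzacc with ⟨j, rfl⟩ | ⟨i, rfl⟩ | ⟨v, hv, rfl⟩
        · exact Or.inr (Or.inl ⟨j, rfl⟩)
        · exfalso
          have h2 := hM.symm _ _ hMu
          rw [hd1 u i] at h2
          simpa using h2
        · exact Or.inr (Or.inr ⟨v, hv, rfl⟩)
    have haj : ∀ j : Fin (n - k), ∃ u : U, M (Sum.inr (Sum.inl j)) = some (Sum.inl u) := by
      by_contra hcon
      push_neg at hcon
      obtain ⟨j1, hj1⟩ := hcon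
      have hj1none : M (Sum.inr (Sum.inl j1)) = none := by
        cases hMa : M (Sum.inr (Sum.inl j1)) with
        | none => rfl
        | some z =>
          exfalso
          have hzacc := (hM.mutacc _ _ hMa).1
          rw [hacc_a] at hzacc
          simp only [Finset.mem_image, Finset.mem_univ, true_and] at hzacc
          obtain ⟨v, rfl⟩ := hzacc
          exact hj1 v hMa
      have hall : ∀ u : U, ∃ j, M (Sum.inl u) = some (Sum.inr (Sum.inl j)) := by
        intro u
        by_contra hno
        push_neg at hno
        apply hstab (Sum.inl u) (Sum.inr (Sum.inl j1))
        refine ⟨⟨hA_mem u j1, hu_mem_a j1 u⟩, hno j1, ?_, ?_⟩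
        · intro z hz
          have hzacc := (hM.mutacc _ _ hz).1
          rcases hacc_u_cases u z hzacc with ⟨j, rfl⟩ | ⟨i, rfl⟩ | ⟨v, hv, rfl⟩
          · exact absurd hz (hno j)
          · exact hstrict_uAd u j1 i
          · exact hStrans _ _ _ _ (hstrict_uAd u j1 i0) (hstrict_udN u i0 v hv)
        · intro z hz
          rw [hj1none] at hz
          exact absurd hz (by simp)
      choose g hg using hall
      have hginj : Function.Injective g := by
        intro u u' h
        have h1 := hM.symm _ _ (hg u)
        have h2 := hM.symm _ _ (hg u')
        rw [h] at h1
        rw [h1] at h2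
        simpa using h2
      have hcard := Fintype.card_le_of_injective g hginj
      rw [hn, Fintype.card_fin] at hcard
      omega
    choose f hf using haj
    have hval : modCost P M c =
        ∑ x : U ⊕ (Fin (n - k) ⊕ U × Fin c × Fin 2),
          Sum.elim (fun u : U => (M (Sum.inl u)).elim c (fun y => P.rank (Sum.inl u) y))
            (fun _ => 0) x := by
      rw [modCost]
      refine Finset.sum_congr rfl ?_
      rintro (u | j | ⟨u, i, b⟩) _
      · cases hMu : M (Sum.inl u) <;> simp [hMu]
      · rw [hf j]
        simp [hrank_au]
      · rcases hb2' b with rfl | rfl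
        · rw [hd1 u i]
          simp [hrank_d1]
        · rw [hM.symm _ _ (hd1 u i)]
          simp [hrank_d2]
    have hval2 : modCost P M c =
        ∑ u : U, (M (Sum.inl u)).elim c (fun y => P.rank (Sum.inl u) y) := by
      rw [hval, Fintype.sum_sum_type]
      simp
    set val : U → ℕ := fun u => (M (Sum.inl u)).elim c (fun y => P.rank (Sum.inl u) y) with hvaldef
    set T : Finset U := Finset.univ.filter (fun u => M (Sum.inl u) = none) with hT
    set NB : Finset U := Finset.univ.filter
      (fun u => ∃ v, v ∈ G.neighborFinset u ∧ M (Sum.inl u) = some (Sum.inl v)) with hNB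
    set AA : Finset U := Finset.univ.filter
      (fun u => ∃ j, M (Sum.inl u) = some (Sum.inr (Sum.inl j))) with hAA
    have hdisjTN : Disjoint T NB := by
      rw [Finset.disjoint_left]
      intro u hu hu'
      rw [hT, Finset.mem_filter] at hu
      rw [hNB, Finset.mem_filter] at hu'
      obtain ⟨v, hv, heq⟩ := hu'.2
      rw [hu.2] at heq
      exact absurd heq (by simp)
    have hAAcard : AA.card ≤ n - k := by
      set jf : U → Fin (n - k) := fun u =>
        if h : ∃ j, M (Sum.inl u) = some (Sum.inr (Sum.inl j)) then h.choose else j0 with hjf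
      have hjfs : ∀ u ∈ AA, M (Sum.inl u) = some (Sum.inr (Sum.inl (jf u))) := by
        intro u hu
        rw [hAA, Finset.mem_filter] at hu
        have h := hu.2
        rw [hjf]
        simp only [dif_pos h]
        exact h.choose_spec
      have hinj : Set.InjOn jf AA := by
        intro u hu u' hu' h
        have h1 := hM.symm _ _ (hjfs u hu)
        have h2 := hM.symm _ _ (hjfs u' hu')
        rw [h] at h1
        rw [h1] at h2
        simpa using h2
      calc AA.card ≤ (Finset.univ : Finset (Fin (n - k))).card :=
            Finset.card_le_card_of_injOn jf (fun u _ => Finset.mem_univ _) hinj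
        _ = n - k := by rw [Finset.card_univ, Fintype.card_fin]
    have hTNcard : k ≤ T.card + NB.card := by
      have hcover : Finset.univ \ AA ⊆ T ∪ NB := by
        intro u hu
        simp only [Finset.mem_sdiff, Finset.mem_univ, true_and] at hu
        rcases hupart u with h | h | h
        · exact Finset.mem_union_left _
            (by rw [hT]; exact Finset.mem_filter.2 ⟨Finset.mem_univ _, h⟩)
        · exact absurd (by rw [hAA]; exact Finset.mem_filter.2 ⟨Finset.mem_univ _, h⟩) hu
        · exact Finset.mem_union_right _
            (by rw [hNB]; exact Finset.mem_filter.2 ⟨Finset.mem_univ _, h⟩)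
      have h1 : (Finset.univ \ AA).card ≤ (T ∪ NB).card := Finset.card_le_card hcover
      have h2 : (Finset.univ \ AA).card = n - AA.card := by
        rw [Finset.card_sdiff_of_subset (Finset.subset_univ _), Finset.card_univ, hn]
      have h3 : (T ∪ NB).card ≤ T.card + NB.card := Finset.card_union_le _ _
      omega
    have hbound : c * T.card + (c + 1) * NB.card ≤ modCost P M c := by
      rw [hval2]
      have hTval : ∀ u ∈ T, val u = c := by
        intro u hu
        rw [hT, Finset.mem_filter] at hu
        rw [hvaldef]
        simp only [hu.2]
        rfl
      have hNBval : ∀ u ∈ NB, c + 1 ≤ val u := by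
        intro u hu
        rw [hNB, Finset.mem_filter] at hu
        obtain ⟨v, hv, heq⟩ := hu.2
        rw [hvaldef]
        simp only [heq, Option.elim]
        exact hrank_nb u v hv
      calc c * T.card + (c + 1) * NB.card
          = ∑ _u ∈ T, c + ∑ _u ∈ NB, (c + 1) := by
            rw [Finset.sum_const, Finset.sum_const, smul_eq_mul, smul_eq_mul,
              mul_comm T.card c, mul_comm NB.card (c + 1)]
        _ ≤ ∑ u ∈ T, val u + ∑ u ∈ NB, val u := by
            refine add_le_add (Finset.sum_le_sum ?_) (Finset.sum_le_sum ?_)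
            · intro u hu; exact (hTval u hu).ge
            · intro u hu; exact hNBval u hu
        _ = ∑ u ∈ T ∪ NB, val u := (Finset.sum_union hdisjTN).symm
        _ ≤ ∑ u : U, val u := Finset.sum_le_sum_of_subset (Finset.subset_univ _)
    have e1 : c * T.card + (c + 1) * NB.card ≤ c * k := le_trans hbound hcost
    have hk' : T.card + NB.card ≤ k := by
      have h4 : c * (T.card + NB.card) ≤ c * k := by
        calc c * (T.card + NB.card) = c * T.card + c * NB.card := Nat.mul_add _ _ _
          _ ≤ c * T.card + (c + 1) * NB.card := by
              exact Nat.add_le_add_left (Nat.mul_le_mul_right _ (Nat.le_succ c)) _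
          _ ≤ c * k := e1
      exact Nat.le_of_mul_le_mul_left h4 (by omega)
    have e2 : T.card + NB.card = k := le_antisymm hk' hTNcard
    have hm0 : NB.card = 0 := by
      have h5 : c * k = c * T.card + c * NB.card := by rw [← e2, Nat.mul_add]
      rw [h5] at e1
      have h6 : (c + 1) * NB.card ≤ c * NB.card := Nat.le_of_add_le_add_left e1
      have h7 : c * NB.card + NB.card ≤ c * NB.card + 0 := by
        rw [Nat.add_zero]
        calc c * NB.card + NB.card = (c + 1) * NB.card := (Nat.succ_mul c _).symm
          _ ≤ c * NB.card := h6
      exact Nat.le_zero.1 (Nat.le_of_add_le_add_left h7)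
    refine ⟨T, by omega, ?_⟩
    intro u hu v hv hadj
    have hu' : M (Sum.inl u) = none := by
      rw [hT, Finset.mem_filter] at hu
      exact hu.2
    have hv' : M (Sum.inl v) = none := by
      rw [hT, Finset.mem_filter] at hv
      exact hv.2
    apply hstab (Sum.inl u) (Sum.inl v)
    refine ⟨⟨hN_mem u v (by simpa using hadj), hN_mem v u (by simpa using hadj.symm)⟩,
      by rw [hu']; simp, ?_, ?_⟩
    · intro z hz
      rw [hu'] at hz
      exact absurd hz (by simp)
    · intro z hz
      rw [hv'] at hz
      exact absurd hz (by simp)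
end
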